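/- arXiv:2411.09485 — 10 statements merged into one kernel-verified Lean document; each statement's English description precedes it below -/
import Mathlib

section
/- Let α = (α₀,α₁,α₂) ∈ ℕ³ and β₂ ∈ ℕ with β₂ ≤ α₀ + α₁ + 1. Then ∫_T (1-x-y)^{α₀} x^{α₁} y^{α₂} / (1-y)^{β₂} d(x,y) = (α₀! α₁! α₂! · (α₀+α₁+1-β₂)!) / ((α₀+α₁+α₂-β₂+2)! · (α₀+α₁+1)!), where the integral is the Lebesgue integral over the standard triangle T. -/
/-!
Slicing the triangle horizontally, the section at height `y` is `[0, 1 - y]`, and on it the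
substitution `x = (1 - y) t` turns the inner integral into `(1 - y) ^ (α₀ + α₁ + 1)` times the Beta
integral `B(α₁ + 1, α₀ + 1)`. The hypothesis on `β₂` makes `(1 - y) ^ (α₀ + α₁ + 1 - β₂)` a
polynomial, so the outer integral is again a Beta integral. Fubini applies because the integrand is
nonnegative and its iterated integral is finite.
-/

open MeasureTheory Set Nat

theorem integral_pow_mul_one_sub_pow (a b : ℕ) :
    ∫ x in (0 : ℝ)..1, x ^ a * (1 - x) ^ b = (a ! * b ! : ℝ) / (a + b + 1)! := by
  induction b generalizing a with
  | zero =>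
    simp only [pow_zero, mul_one, integral_pow, add_zero, factorial_succ]
    push_cast
    field_simp
    simp
  | succ b ih =>
    -- from `(1 - x) ^ (b + 1) = (1 - x) ^ b - x * (1 - x) ^ b`
    have hsplit : ∫ x in (0 : ℝ)..1, x ^ a * (1 - x) ^ (b + 1) =
        (∫ x in (0 : ℝ)..1, x ^ a * (1 - x) ^ b) - ∫ x in (0 : ℝ)..1, x ^ (a + 1) * (1 - x) ^ b := by
      rw [← intervalIntegral.integral_sub ((by fun_prop : Continuous _).intervalIntegrable _ _)
        ((by fun_prop : Continuous _).intervalIntegrable _ _)]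
      congr 1 with x
      ring
    rw [hsplit, ih, ih, show a + 1 + b + 1 = a + (b + 1) + 1 by omega]
    simp only [factorial_succ, show a + (b + 1) = a + b + 1 by omega]
    push_cast
    field_simp
    ring

theorem integral_pow_mul_sub_pow (a b : ℕ) (c : ℝ) :
    ∫ x in (0 : ℝ)..c, x ^ a * (c - x) ^ b =
      c ^ (a + b + 1) * ((a ! * b ! : ℝ) / (a + b + 1)!) := by
  have hscale : ∀ t : ℝ, (t * c) ^ a * (c - t * c) ^ b = c ^ (a + b) * (t ^ a * (1 - t) ^ b) := by
    intro t
    rw [show c - t * c = c * (1 - t) by ring, mul_pow, mul_pow, pow_add]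
    ring
  have hsubst := intervalIntegral.smul_integral_comp_mul_right (fun x ↦ x ^ a * (c - x) ^ b) c
    (a := 0) (b := 1)
  rw [zero_mul, one_mul] at hsubst
  rw [← hsubst]
  simp only [hscale, intervalIntegral.integral_const_mul, integral_pow_mul_one_sub_pow, smul_eq_mul]
  ring

def stdTriangle : Set (ℝ × ℝ) := {q | 0 ≤ q.1 ∧ 0 ≤ q.2 ∧ q.1 + q.2 ≤ 1}

theorem measurableSet_stdTriangle : MeasurableSet stdTriangle := by
  unfold stdTriangle
  measurability

theorem mk_mem_stdTriangle {x y : ℝ} : (x, y) ∈ stdTriangle ↔ 0 ≤ y ∧ x ∈ Icc 0 (1 - y) := by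
  simp only [stdTriangle, mem_ofPred_eq, mem_Icc]
  constructor <;> rintro ⟨_, _, _⟩ <;> refine ⟨?_, ?_, ?_⟩ <;> linarith

theorem indicator_stdTriangle_mk_of_nonneg (f : ℝ × ℝ → ℝ) {y : ℝ} (hy : 0 ≤ y) :
    (fun x ↦ stdTriangle.indicator f (x, y)) = (Icc 0 (1 - y)).indicator (fun x ↦ f (x, y)) := by
  ext x
  simp only [indicator, mk_mem_stdTriangle, hy, true_and]

theorem indicator_stdTriangle_mk_of_neg (f : ℝ × ℝ → ℝ) {y : ℝ} (hy : y < 0) :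
    (fun x ↦ stdTriangle.indicator f (x, y)) = 0 := by
  ext x
  simp [mk_mem_stdTriangle, hy.not_ge]

theorem integral_indicator_stdTriangle_mk (f : ℝ × ℝ → ℝ) (y : ℝ) :
    ∫ x, stdTriangle.indicator f (x, y) =
      (Icc 0 1).indicator (fun y ↦ ∫ x in (0 : ℝ)..1 - y, f (x, y)) y := by
  rcases lt_or_ge y 0 with hy₀ | hy₀
  · rw [indicator_stdTriangle_mk_of_neg f hy₀, indicator_of_notMem (by simp [hy₀])]
    simp
  rw [indicator_stdTriangle_mk_of_nonneg f hy₀, integral_indicator measurableSet_Icc]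
  rcases le_or_gt y 1 with hy₁ | hy₁
  · rw [indicator_of_mem (mem_Icc.2 ⟨hy₀, hy₁⟩), integral_Icc_eq_integral_Ioc,
      intervalIntegral.integral_of_le (by linarith)]
  · rw [indicator_of_notMem (by simp [hy₁.not_ge]), Icc_eq_empty (by linarith)]
    simp

theorem integrable_indicator_stdTriangle_mk {f : ℝ × ℝ → ℝ}
    (hsec : ∀ y ∈ Icc (0 : ℝ) 1, IntegrableOn (fun x ↦ f (x, y)) (Icc 0 (1 - y))) (y : ℝ) :
    Integrable (fun x ↦ stdTriangle.indicator f (x, y)) := by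
  rcases lt_or_ge y 0 with hy₀ | hy₀
  · rw [indicator_stdTriangle_mk_of_neg f hy₀]
    exact integrable_zero _ _ _
  rw [indicator_stdTriangle_mk_of_nonneg f hy₀, integrable_indicator_iff measurableSet_Icc]
  rcases le_or_gt y 1 with hy₁ | hy₁
  · exact hsec y ⟨hy₀, hy₁⟩
  · rw [Icc_eq_empty (by linarith)]
    exact integrableOn_empty

theorem integral_stdTriangle_eq_of_nonneg {f : ℝ × ℝ → ℝ} (hf : Measurable f)
    (hf₀ : ∀ q ∈ stdTriangle, 0 ≤ f q)
    (hsec : ∀ y ∈ Icc (0 : ℝ) 1, IntegrableOn (fun x ↦ f (x, y)) (Icc 0 (1 - y)))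
    (hint : IntegrableOn (fun y ↦ ∫ x in (0 : ℝ)..1 - y, f (x, y)) (Icc 0 1)) :
    ∫ q in stdTriangle, f q = ∫ y in (0 : ℝ)..1, ∫ x in (0 : ℝ)..1 - y, f (x, y) := by
  have hF : Integrable (stdTriangle.indicator f) (volume.prod volume) := by
    rw [integrable_prod_iff' (hf.indicator measurableSet_stdTriangle).aestronglyMeasurable]
    refine ⟨ae_of_all _ (integrable_indicator_stdTriangle_mk hsec), ?_⟩
    simp_rw [Real.norm_of_nonneg (indicator_nonneg hf₀ _), integral_indicator_stdTriangle_mk]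
    exact hint.integrable_indicator measurableSet_Icc
  calc ∫ q in stdTriangle, f q = ∫ q, stdTriangle.indicator f q :=
        (integral_indicator measurableSet_stdTriangle).symm
    _ = ∫ y, ∫ x, stdTriangle.indicator f (x, y) := by
        rw [Measure.volume_eq_prod, integral_prod_symm _ hF]
    _ = ∫ y in (0 : ℝ)..1, ∫ x in (0 : ℝ)..1 - y, f (x, y) := by
        simp_rw [integral_indicator_stdTriangle_mk]
        rw [integral_indicator measurableSet_Icc, integral_Icc_eq_integral_Ioc,
          intervalIntegral.integral_of_le zero_le_one]

theorem integral_stdTriangle_section {a b c β : ℕ} (hβ : β ≤ a + b + 1) {y : ℝ} (hy : y ≠ 1) :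
    ∫ x in (0 : ℝ)..1 - y, (1 - x - y) ^ a * x ^ b * y ^ c / (1 - y) ^ β =
      y ^ c * (1 - y) ^ (a + b + 1 - β) * ((b ! * a ! : ℝ) / (b + a + 1)!) := by
  have hsplit : (1 - y) ^ (b + a + 1) = (1 - y) ^ (a + b + 1 - β) * (1 - y) ^ β := by
    rw [← pow_add]
    congr 1
    omega
  simp_rw [show ∀ x, (1 - x - y) ^ a * x ^ b * y ^ c / (1 - y) ^ β =
      x ^ b * ((1 - y) - x) ^ a * (y ^ c / (1 - y) ^ β) by intro x; ring]
  rw [intervalIntegral.integral_mul_const, integral_pow_mul_sub_pow, hsplit]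
  field_simp

/-- Exact integral of `λ₀^{α₀} λ₁^{α₁} λ₂^{α₂} / (1-λ₂)^{β₂}` over the standard triangle. -/
theorem triangle_rational_integral_special (α₀ α₁ α₂ β₂ : ℕ) (h : β₂ ≤ α₀ + α₁ + 1) :
    (∫ q in {q : ℝ × ℝ | 0 ≤ q.1 ∧ 0 ≤ q.2 ∧ q.1 + q.2 ≤ 1},
        (1 - q.1 - q.2) ^ α₀ * q.1 ^ α₁ * q.2 ^ α₂ / (1 - q.2) ^ β₂) =
      ((α₀.factorial * α₁.factorial * α₂.factorial * (α₀ + α₁ + 1 - β₂).factorial : ℕ) : ℝ) /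
        (((α₀ + α₁ + α₂ + 2 - β₂).factorial * (α₀ + α₁ + 1).factorial : ℕ) : ℝ) := by
  set m := α₀ + α₁ + 1 - β₂
  set G : ℝ → ℝ := fun y ↦ y ^ α₂ * (1 - y) ^ m * ((α₁ ! * α₀ ! : ℝ) / (α₁ + α₀ + 1)!)
  have hinner : EqOn (fun y ↦ ∫ x in (0 : ℝ)..1 - y,
      (1 - x - y) ^ α₀ * x ^ α₁ * y ^ α₂ / (1 - y) ^ β₂) G {1}ᶜ :=
    fun y hy ↦ integral_stdTriangle_section h hy
  have hint : IntegrableOn (fun y ↦ ∫ x in (0 : ℝ)..1 - y,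
      (1 - x - y) ^ α₀ * x ^ α₁ * y ^ α₂ / (1 - y) ^ β₂) (Icc 0 1) :=
    (by fun_prop : Continuous G).integrableOn_Icc.congr_fun_ae
      (ae_restrict_of_ae ((volume.ae_ne 1).mono fun y hy ↦ (hinner hy).symm))
  have hnonneg : ∀ q ∈ stdTriangle,
      0 ≤ (1 - q.1 - q.2) ^ α₀ * q.1 ^ α₁ * q.2 ^ α₂ / (1 - q.2) ^ β₂ := by
    rintro ⟨x, y⟩ ⟨hx, hy, hxy⟩
    have h₀ : 0 ≤ 1 - x - y := by linarith
    have h₂ : 0 ≤ 1 - y := by linarith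
    positivity
  have hsec : ∀ y : ℝ, Continuous fun x : ℝ ↦
      (1 - x - y) ^ α₀ * x ^ α₁ * y ^ α₂ / (1 - y) ^ β₂ := fun y ↦ by
    apply Continuous.div_const
    fun_prop
  change ∫ q in stdTriangle, _ = _
  rw [integral_stdTriangle_eq_of_nonneg (by fun_prop) hnonneg
    (fun y _ ↦ (hsec y).integrableOn_Icc) hint,
    intervalIntegral.integral_congr_uIoo (fun y hy ↦ hinner (ne_of_lt (by simpa using hy.2))),
    intervalIntegral.integral_mul_const, integral_pow_mul_one_sub_pow,
    show α₂ + m + 1 = α₀ + α₁ + α₂ + 2 - β₂ by omega, add_comm α₁ α₀]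
  push_cast
  ring
end

section
/- For every α ∈ ℕ, the Lebesgue integral ∫₀¹ (y^α / (1-y)) · log y dy equals −π²/6 + ∑_{j=1}^{α} 1/j². In particular the integrand, which is negative on (0,1), is integrable. -/
/-!
Expanding `1/(1-y)` as a geometric series, the integrand is `-∑ₙ y^(α+n) (-log y)`, a series of
nonnegative functions on `(0,1)`. Each term integrates to `1/(α+n+1)²` (an antiderivative of
`x^m (-log x)` is `x^(m+1)/(m+1)² - x^(m+1) log x/(m+1)`), so by monotone convergence the integral
is minus the tail `∑_{k>α} 1/k² = π²/6 - ∑_{j ≤ α} 1/j²` of `ζ(2)`.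
-/

open MeasureTheory Set Real

theorem pow_mul_neg_log_nonneg {x : ℝ} (hx₀ : 0 ≤ x) (hx₁ : x ≤ 1) (m : ℕ) :
    0 ≤ x ^ m * -log x :=
  mul_nonneg (pow_nonneg hx₀ m) (neg_nonneg.2 (log_nonpos hx₀ hx₁))

theorem integrable_and_integral_eq_of_hasSum_of_nonneg {α ι : Type*} [MeasurableSpace α]
    [Countable ι] {μ : Measure α} {F : ι → α → ℝ} {f : α → ℝ} {I : ℝ}
    (hF_int : ∀ i, Integrable (F i) μ) (hF_nonneg : ∀ i, 0 ≤ᵐ[μ] F i)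
    (hf : ∀ᵐ a ∂μ, HasSum (F · a) (f a)) (hI : HasSum (fun i ↦ ∫ a, F i a ∂μ) I) :
    Integrable f μ ∧ ∫ a, f a ∂μ = I := by
  have hF_nonneg' : ∀ᵐ a ∂μ, ∀ i, 0 ≤ F i a := ae_all_iff.2 hF_nonneg
  have hf_nonneg : 0 ≤ᵐ[μ] f := by
    filter_upwards [hf, hF_nonneg'] with a ha h0 using ha.nonneg h0
  have hf_meas : AEStronglyMeasurable f μ :=
    aestronglyMeasurable_of_tendsto_ae _
      (fun s ↦ Finset.aestronglyMeasurable_fun_sum s fun i _ ↦ (hF_int i).1) hf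
  have hlintegral : ∫⁻ a, ENNReal.ofReal (f a) ∂μ = ENNReal.ofReal I := calc
    ∫⁻ a, ENNReal.ofReal (f a) ∂μ = ∫⁻ a, ∑' i, ENNReal.ofReal (F i a) ∂μ := by
      refine lintegral_congr_ae ?_
      filter_upwards [hf, hF_nonneg'] with a ha h0
      rw [← ha.tsum_eq, ENNReal.ofReal_tsum_of_nonneg h0 ha.summable]
    _ = ∑' i, ∫⁻ a, ENNReal.ofReal (F i a) ∂μ :=
      lintegral_tsum fun i ↦ (hF_int i).1.aemeasurable.ennreal_ofReal
    _ = ∑' i, ENNReal.ofReal (∫ a, F i a ∂μ) := by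
      simp_rw [ofReal_integral_eq_lintegral_ofReal (hF_int _) (hF_nonneg _)]
    _ = ENNReal.ofReal I := by
      rw [← ENNReal.ofReal_tsum_of_nonneg (fun i ↦ integral_nonneg_of_ae (hF_nonneg i))
        hI.summable, hI.tsum_eq]
  refine ⟨⟨hf_meas, ?_⟩, ?_⟩
  · rw [hasFiniteIntegral_iff_ofReal hf_nonneg, hlintegral]
    exact ENNReal.ofReal_lt_top
  · rw [integral_eq_lintegral_of_nonneg_ae hf_nonneg hf_meas, hlintegral,
      ENNReal.toReal_ofReal (hI.nonneg fun i ↦ integral_nonneg_of_ae (hF_nonneg i))]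

theorem integrableOn_pow_mul_neg_log_and_integral_eq (m : ℕ) :
    IntegrableOn (fun x : ℝ ↦ x ^ m * -log x) (Ioc 0 1) ∧
      ∫ x in (0 : ℝ)..1, x ^ m * -log x = 1 / ((m : ℝ) + 1) ^ 2 := by
  set c : ℝ := (m : ℝ) + 1
  -- written with `negMulLog` so that continuity at `0` comes for free
  set G : ℝ → ℝ := fun x ↦ x ^ (m + 1) / c ^ 2 + x ^ m * negMulLog x / c
  have hG_cont : Continuous G := by unfold G; fun_prop
  have hG_deriv : ∀ x ∈ Ioo (0 : ℝ) 1, HasDerivAt G (x ^ m * -log x) x := by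
    intro x hx
    have hx₀ : x ≠ 0 := hx.1.ne'
    have hG_eq : G = fun y ↦ y ^ (m + 1) / c ^ 2 - y ^ (m + 1) * log y / c := by
      ext y
      simp only [G, negMulLog, pow_succ]
      ring
    rw [hG_eq]
    have hpow := hasDerivAt_pow (m + 1) x
    refine ((hpow.div_const _).sub ((hpow.mul (hasDerivAt_log hx₀)).div_const c)).congr_deriv ?_
    simp only [c, Nat.add_sub_cancel]
    push_cast
    field_simp
    ring
  have hint := intervalIntegral.integrableOn_deriv_of_nonneg hG_cont.continuousOn hG_deriv
    fun x hx ↦ pow_mul_neg_log_nonneg hx.1.le hx.2.le m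
  refine ⟨hint, ?_⟩
  rw [intervalIntegral.integral_eq_sub_of_hasDerivAt_of_le zero_le_one hG_cont.continuousOn
    hG_deriv ((intervalIntegrable_iff_integrableOn_Ioc_of_le zero_le_one).2 hint)]
  simp [G]

theorem hasSum_one_div_nat_add_one_sq (k : ℕ) :
    HasSum (fun n : ℕ ↦ 1 / (((k + n : ℕ) : ℝ) + 1) ^ 2)
      (π ^ 2 / 6 - ∑ j ∈ Finset.Icc 1 k, 1 / (j : ℝ) ^ 2) := by
  have htail := (hasSum_nat_add_iff' (k + 1)).2 hasSum_zeta_two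
  -- `hasSum_zeta_two` starts at the junk term `1 / 0 ^ 2 = 0`.
  have hhead : ∑ i ∈ Finset.range (k + 1), 1 / (i : ℝ) ^ 2 =
      ∑ j ∈ Finset.Icc 1 k, 1 / (j : ℝ) ^ 2 := by
    rw [Finset.range_eq_Ico, Finset.sum_eq_sum_Ico_succ_bot (Nat.succ_pos k),
      ← Finset.Ico_add_one_right_eq_Icc]
    simp
  have hterm : (fun n : ℕ ↦ 1 / (((k + n : ℕ) : ℝ) + 1) ^ 2) =
      fun n ↦ 1 / ((n + (k + 1) : ℕ) : ℝ) ^ 2 := by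
    ext n
    push_cast
    ring
  rw [hterm, ← hhead]
  exact htail

theorem hasSum_pow_add_mul {y : ℝ} (hy₀ : 0 ≤ y) (hy₁ : y < 1) (k : ℕ) (c : ℝ) :
    HasSum (fun n : ℕ ↦ y ^ (k + n) * c) (y ^ k / (1 - y) * c) := by
  simpa [pow_add, div_eq_mul_inv, mul_assoc] using
    ((hasSum_geometric_of_lt_one hy₀ hy₁).mul_left (y ^ k)).mul_right c

/-- `y ↦ y^α log y/(1-y)` is integrable on `(0,1)` and
`∫₀¹ y^α/(1-y) · log y dy = −π²/6 + ∑_{j=1}^α 1/j²`. -/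
theorem integral_pow_div_one_sub_mul_log (α : ℕ) :
    IntervalIntegrable (fun y : ℝ => y ^ α / (1 - y) * Real.log y) volume 0 1 ∧
      (∫ y in (0 : ℝ)..1, y ^ α / (1 - y) * Real.log y) =
        -(Real.pi ^ 2 / 6) + ∑ j ∈ Finset.Icc 1 α, 1 / (j : ℝ) ^ 2 := by
  set μ := volume.restrict (Ioc (0 : ℝ) 1)
  have hterm_int (n : ℕ) : Integrable (fun y : ℝ ↦ y ^ (α + n) * -log y) μ :=
    (integrableOn_pow_mul_neg_log_and_integral_eq (α + n)).1
  have hterm_integral (n : ℕ) :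
      ∫ y, y ^ (α + n) * -log y ∂μ = 1 / (((α + n : ℕ) : ℝ) + 1) ^ 2 := by
    rw [← intervalIntegral.integral_of_le zero_le_one]
    exact (integrableOn_pow_mul_neg_log_and_integral_eq (α + n)).2
  have hterm_nonneg (n : ℕ) : 0 ≤ᵐ[μ] fun y ↦ y ^ (α + n) * -log y :=
    (ae_restrict_mem measurableSet_Ioc).mono fun y hy ↦ pow_mul_neg_log_nonneg hy.1.le hy.2 _
  have hseries : ∀ᵐ y ∂μ, HasSum (fun n ↦ y ^ (α + n) * -log y) (y ^ α / (1 - y) * -log y) := by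
    filter_upwards [ae_restrict_mem measurableSet_Ioc] with y hy
    rcases hy.2.lt_or_eq with hy₁ | rfl
    · exact hasSum_pow_add_mul hy.1.le hy₁ α _
    · simp
  obtain ⟨hint, hval⟩ := integrable_and_integral_eq_of_hasSum_of_nonneg hterm_int hterm_nonneg
    hseries (by simpa only [hterm_integral] using hasSum_one_div_nat_add_one_sq α)
  have hneg : (fun y : ℝ ↦ y ^ α / (1 - y) * log y) = fun y ↦ -(y ^ α / (1 - y) * -log y) := by
    ext y
    ring
  rw [hneg, intervalIntegral.integral_neg, intervalIntegral.integral_of_le zero_le_one, hval]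
  exact ⟨(intervalIntegrable_iff_integrableOn_Ioc_of_le zero_le_one).2 hint.neg, by ring⟩
end

section
/- Let α, β ∈ ℕ³ with α₀ ≥ 1, β₁ ≥ 1 and β₂ ≥ 1. Then for every λ = (λ₀,λ₁,λ₂) ∈ ℝ³ with λ₀ + λ₁ + λ₂ = 1 and λ_k ≠ 1 for all k, one has λ^α/(1-λ)^β = (1/2) · (λ^α/(1-λ)^{β−e₁} + λ^α/(1-λ)^{β−e₂} + λ^{α−e₀+e₁}/(1-λ)^{β−e₁} + λ^{α−e₀+e₂}/(1-λ)^{β−e₂}) − λ^{α−e₀+e₁+e₂}/(1-λ)^β. -/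
/-- Six-term recursion: for `α₀ ≥ 1`, `β₁, β₂ ≥ 1` and barycentric `λ`,
`λ^α/(1-λ)^β = ½(λ^α/(1-λ)^{β-e₁} + λ^α/(1-λ)^{β-e₂} + λ^{α-e₀+e₁}/(1-λ)^{β-e₁}
 + λ^{α-e₀+e₂}/(1-λ)^{β-e₂}) − λ^{α-e₀+e₁+e₂}/(1-λ)^β`. -/
theorem rational_rec_six_term (α₀ α₁ α₂ β₀ β₁ β₂ : ℕ)
    (hα₀ : 1 ≤ α₀) (hβ₁ : 1 ≤ β₁) (hβ₂ : 1 ≤ β₂)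
    (l₀ l₁ l₂ : ℝ) (hsum : l₀ + l₁ + l₂ = 1)
    (h₀ : l₀ ≠ 1) (h₁ : l₁ ≠ 1) (h₂ : l₂ ≠ 1) :
    l₀ ^ α₀ * l₁ ^ α₁ * l₂ ^ α₂ / ((1 - l₀) ^ β₀ * (1 - l₁) ^ β₁ * (1 - l₂) ^ β₂) =
      (1 / 2) *
          (l₀ ^ α₀ * l₁ ^ α₁ * l₂ ^ α₂ /
              ((1 - l₀) ^ β₀ * (1 - l₁) ^ (β₁ - 1) * (1 - l₂) ^ β₂) +
            l₀ ^ α₀ * l₁ ^ α₁ * l₂ ^ α₂ /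
              ((1 - l₀) ^ β₀ * (1 - l₁) ^ β₁ * (1 - l₂) ^ (β₂ - 1)) +
            l₀ ^ (α₀ - 1) * l₁ ^ (α₁ + 1) * l₂ ^ α₂ /
              ((1 - l₀) ^ β₀ * (1 - l₁) ^ (β₁ - 1) * (1 - l₂) ^ β₂) +
            l₀ ^ (α₀ - 1) * l₁ ^ α₁ * l₂ ^ (α₂ + 1) /
              ((1 - l₀) ^ β₀ * (1 - l₁) ^ β₁ * (1 - l₂) ^ (β₂ - 1))) -
        l₀ ^ (α₀ - 1) * l₁ ^ (α₁ + 1) * l₂ ^ (α₂ + 1) /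
          ((1 - l₀) ^ β₀ * (1 - l₁) ^ β₁ * (1 - l₂) ^ β₂) := by
  obtain ⟨a, rfl⟩ := Nat.exists_eq_add_of_le hα₀
  obtain ⟨b, rfl⟩ := Nat.exists_eq_add_of_le hβ₁
  obtain ⟨c, rfl⟩ := Nat.exists_eq_add_of_le hβ₂
  have e₀ : (1 : ℝ) - l₀ ≠ 0 := sub_ne_zero.2 (Ne.symm h₀)
  have e₁ : (1 : ℝ) - l₁ ≠ 0 := sub_ne_zero.2 (Ne.symm h₁)
  have e₂ : (1 : ℝ) - l₂ ≠ 0 := sub_ne_zero.2 (Ne.symm h₂)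
  have hl₀ : l₀ = 1 - l₁ - l₂ := by linarith
  subst hl₀
  simp only [Nat.add_sub_cancel_left]
  field_simp
  ring
end

section
/- Let α, β ∈ ℕ³ and let p ∈ ℝ with 1 ≤ p < ∞. Then ∫_{int T} |R^α_β(x,y)|^p d(x,y) < ∞ if and only if p · ((α₀+α₁+α₂) − max_j(α_j+β_j)) > −2, where the difference (α₀+α₁+α₂) − max_j(α_j+β_j) is computed in ℤ. In particular R^α_β is Lebesgue integrable on T if and only if max_j(α_j+β_j) ≤ α₀+α₁+α₂+1. -/
/-!
In barycentric coordinates `|R^α_β|^p = ∏ⱼ λⱼ^(p αⱼ) (1 - λⱼ)^(-p βⱼ)`, and the only singularities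
sit at the vertices, where one `1 - λⱼ` vanishes. The three regions `{λⱼ > 1/4}` cover the
triangle; on the region of vertex `j` the factors `λⱼ^(p αⱼ)` and `(1 - λₖ)^(-p βₖ)`, `k ≠ j`, are
bounded above and below by positive constants, and the area-preserving rotation of the triangle,
which permutes the barycentric coordinates cyclically, moves vertex `j` to the origin. Near the
origin the substitution `(x, y) = (s t, s (1 - t))`, of Jacobian `s`, separates the variables:
`x^a y^b (x + y)^c` becomes `s^(a + b + c + 1) t^a (1 - t)^b`, integrable iff `a + b + c > -2`.
So `|R^α_β|^p` is integrable iff `p (|α| - αⱼ - βⱼ) > -2` for every `j`. The closed triangle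
differs from the open one by its frontier, which is null since the triangle is convex.
-/

open MeasureTheory Set

def openTriangle (r : ℝ) : Set (ℝ × ℝ) := {q | 0 < q.1 ∧ 0 < q.2 ∧ q.1 + q.2 < r}

def closedTriangle (r : ℝ) : Set (ℝ × ℝ) := {q | 0 ≤ q.1 ∧ 0 ≤ q.2 ∧ q.1 + q.2 ≤ r}

theorem isClosed_closedTriangle (r : ℝ) : IsClosed (closedTriangle r) :=
  (isClosed_le continuous_const continuous_fst).inter
    ((isClosed_le continuous_const continuous_snd).inter
      (isClosed_le (continuous_fst.add continuous_snd) continuous_const))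

theorem isCompact_closedTriangle (r : ℝ) : IsCompact (closedTriangle r) := by
  refine ((isCompact_Icc (a := 0) (b := r)).prod (isCompact_Icc (a := 0) (b := r)))
    |>.of_isClosed_subset (isClosed_closedTriangle r) ?_
  rintro q ⟨h1, h2, h12⟩
  exact ⟨⟨h1, by linarith⟩, h2, by linarith⟩

theorem convex_closedTriangle (r : ℝ) : Convex ℝ (closedTriangle r) := by
  rintro x ⟨hx1, hx2, hx⟩ y ⟨hy1, hy2, hy⟩ a b ha hb hab
  simp only [closedTriangle, mem_ofPred_eq, Prod.fst_add, Prod.snd_add, Prod.smul_fst,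
    Prod.smul_snd, smul_eq_mul]
  refine ⟨by positivity, by positivity, by nlinarith⟩

theorem interior_closedTriangle (r : ℝ) : interior (closedTriangle r) = openTriangle r := by
  set ℓ := ContinuousLinearMap.fst ℝ ℝ ℝ + ContinuousLinearMap.snd ℝ ℝ ℝ
  have hℓ : IsOpenMap ℓ := ℓ.isOpenMap fun x => ⟨(x, 0), by simp [ℓ]⟩
  have : closedTriangle r = Prod.fst ⁻¹' Ici 0 ∩ (Prod.snd ⁻¹' Ici 0 ∩ ℓ ⁻¹' Iic r) := rfl
  rw [this, interior_inter, interior_inter,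
    ← isOpenMap_fst.preimage_interior_eq_interior_preimage continuous_fst,
    ← isOpenMap_snd.preimage_interior_eq_interior_preimage continuous_snd,
    ← hℓ.preimage_interior_eq_interior_preimage ℓ.continuous, interior_Ici, interior_Iic]
  rfl

theorem openTriangle_subset_closedTriangle (r : ℝ) : openTriangle r ⊆ closedTriangle r :=
  interior_closedTriangle r ▸ interior_subset

theorem measurableSet_openTriangle (r : ℝ) : MeasurableSet (openTriangle r) :=
  interior_closedTriangle r ▸ isOpen_interior.measurableSet

theorem closedTriangle_ae_eq_openTriangle (r : ℝ) :
    closedTriangle r =ᵐ[volume] openTriangle r := by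
  rw [← interior_closedTriangle]
  exact (interior_ae_eq_of_null_frontier
    ((convex_closedTriangle r).addHaar_frontier volume)).symm

def triangleParam (z : ℝ × ℝ) : ℝ × ℝ := (z.1 * z.2, z.1 * (1 - z.2))

theorem hasFDerivAt_triangleParam (z : ℝ × ℝ) :
    HasFDerivAt triangleParam (LinearMap.toContinuousLinearMap
      (Matrix.toLin (Module.Basis.finTwoProd ℝ) (Module.Basis.finTwoProd ℝ)
        !![z.2, z.1; 1 - z.2, -z.1])) z := by
  rw [Matrix.toLin_finTwoProd_toContinuousLinearMap]
  have h₁ : HasFDerivAt (fun w : ℝ × ℝ => w.1 * w.2)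
      (z.1 • ContinuousLinearMap.snd ℝ ℝ ℝ + z.2 • ContinuousLinearMap.fst ℝ ℝ ℝ) z :=
    hasFDerivAt_fst.mul hasFDerivAt_snd
  have h₂ : HasFDerivAt (fun w : ℝ × ℝ => w.1 * (1 - w.2))
      (z.1 • -ContinuousLinearMap.snd ℝ ℝ ℝ + (1 - z.2) • ContinuousLinearMap.fst ℝ ℝ ℝ) z :=
    hasFDerivAt_fst.mul (hasFDerivAt_snd.const_sub 1)
  refine (h₁.prodMk h₂).congr_fderiv ?_
  ext <;> simp

theorem injOn_triangleParam : InjOn triangleParam {z | z.1 ≠ 0} := by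
  rintro ⟨s, t⟩ hs ⟨s', t'⟩ - h
  simp only [triangleParam, Prod.mk.injEq] at h ⊢
  have hss' : s = s' := by linear_combination h.1 + h.2
  subst hss'
  exact ⟨rfl, mul_left_cancel₀ hs h.1⟩

theorem triangleParam_image (r : ℝ) :
    triangleParam '' (Ioo 0 r ×ˢ Ioo 0 1) = openTriangle r := by
  ext ⟨x, y⟩
  constructor
  · rintro ⟨⟨s, t⟩, ⟨⟨hs0, hsr⟩, ht0, ht1⟩, h⟩
    simp only [triangleParam, Prod.mk.injEq] at h
    obtain ⟨rfl, rfl⟩ := h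
    exact ⟨by positivity, mul_pos hs0 (by linarith), by linarith⟩
  · rintro ⟨hx, hy, hxy⟩
    have hsum : 0 < x + y := by positivity
    refine ⟨(x + y, x / (x + y)), ⟨⟨hsum, hxy⟩, by positivity, ?_⟩, ?_⟩
    · rw [div_lt_one hsum]
      linarith
    · simp only [triangleParam, Prod.mk.injEq]
      constructor
      · field_simp
      · field_simp
        ring

theorem integrable_prod_mul_iff {α β : Type*} [MeasurableSpace α] [MeasurableSpace β]
    {μ : Measure α} {ν : Measure β} [SFinite ν] {f : α → ℝ} {g : β → ℝ}
    (hg : Integrable g ν) (hg0 : ∫ y, g y ∂ν ≠ 0) :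
    Integrable (fun z : α × β => f z.1 * g z.2) (μ.prod ν) ↔ Integrable f μ := by
  refine ⟨fun h => ?_, fun hf => hf.mul_prod hg⟩
  have hint := h.integral_prod_left.mul_const (∫ y, g y ∂ν)⁻¹
  simpa only [integral_const_mul, mul_assoc, mul_inv_cancel₀ hg0, mul_one] using hint

theorem integrableOn_rpow_mul_one_sub_rpow {a b : ℝ} (ha : 0 ≤ a) (hb : 0 ≤ b) :
    IntegrableOn (fun t : ℝ => t ^ a * (1 - t) ^ b) (Ioo 0 1) :=
  (((Real.continuous_rpow_const ha).mul ((Real.continuous_rpow_const hb).comp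
    (continuous_sub_left 1))).continuousOn.integrableOn_Icc).mono_set Ioo_subset_Icc_self

theorem integral_rpow_mul_one_sub_rpow_pos {a b : ℝ} (ha : 0 ≤ a) (hb : 0 ≤ b) :
    0 < ∫ t in Ioo (0 : ℝ) 1, t ^ a * (1 - t) ^ b := by
  rw [← integral_Ioc_eq_integral_Ioo, ← intervalIntegral.integral_of_le zero_le_one]
  refine intervalIntegral.intervalIntegral_pos_of_pos_on ?_ (fun t ⟨ht0, ht1⟩ => ?_) one_pos
  · exact (intervalIntegrable_iff_integrableOn_Ioo_of_le zero_le_one).2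
      (integrableOn_rpow_mul_one_sub_rpow ha hb)
  · have : 0 < 1 - t := by linarith
    positivity

theorem integrableOn_openTriangle_rpow_iff {r a b c : ℝ} (hr : 0 < r) (ha : 0 ≤ a)
    (hb : 0 ≤ b) :
    IntegrableOn (fun q : ℝ × ℝ => q.1 ^ a * q.2 ^ b * (q.1 + q.2) ^ c) (openTriangle r) ↔
      -2 < a + b + c := by
  have hmeas : MeasurableSet (Ioo 0 r ×ˢ Ioo (0 : ℝ) 1) := measurableSet_Ioo.prod measurableSet_Ioo
  rw [← triangleParam_image, integrableOn_image_iff_integrableOn_abs_det_fderiv_smul volume hmeas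
    (fun z _ => (hasFDerivAt_triangleParam z).hasFDerivWithinAt)
    (injOn_triangleParam.mono fun z hz => hz.1.1.ne'),
    integrableOn_congr_fun (g := fun z => z.1 ^ (a + b + c + 1) * (z.2 ^ a * (1 - z.2) ^ b)) ?_
      hmeas, IntegrableOn, Measure.volume_eq_prod, ← Measure.prod_restrict,
    integrable_prod_mul_iff (f := fun s => s ^ (a + b + c + 1))
      (integrableOn_rpow_mul_one_sub_rpow ha hb)
      (integral_rpow_mul_one_sub_rpow_pos ha hb).ne',
    ← IntegrableOn, intervalIntegral.integrableOn_Ioo_rpow_iff hr]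
  · exact ⟨fun h => by linarith, fun h => by linarith⟩
  rintro ⟨s, t⟩ ⟨⟨hs, -⟩, ht0, ht1⟩
  have h1t : 0 < 1 - t := by linarith
  simp only [ContinuousLinearMap.det, LinearMap.coe_toContinuousLinearMap, LinearMap.det_toLin,
    Matrix.det_fin_two_of, triangleParam, smul_eq_mul]
  rw [show t * -s - s * (1 - t) = -s by ring, abs_neg, abs_of_pos hs,
    show s * t + s * (1 - t) = s by ring, Real.mul_rpow hs.le ht0.le,
    Real.mul_rpow hs.le h1t.le, Real.rpow_add hs, Real.rpow_add hs, Real.rpow_add hs,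
    Real.rpow_one]
  ring

theorem integrableOn_mul_iff_of_continuousOn {X : Type*} [TopologicalSpace X] [MeasurableSpace X]
    [OpensMeasurableSpace X] {μ : Measure X} {f u : X → ℝ} {s K : Set X}
    (hu : ContinuousOn u K) (hu0 : ∀ x ∈ K, u x ≠ 0) (hK : IsCompact K) (hs : MeasurableSet s)
    (hsK : s ⊆ K) : IntegrableOn (fun x => f x * u x) s μ ↔ IntegrableOn f s μ := by
  refine ⟨fun h => ?_, fun h => h.mul_continuousOn_of_subset hu hs hK hsK⟩
  refine (h.mul_continuousOn_of_subset (hu.inv₀ hu0) hs hK hsK).congr_fun (fun x hx => ?_) hs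
  simp [mul_assoc, mul_inv_cancel₀ (hu0 x (hsK hx))]

def baryCoord (q : ℝ × ℝ) : Fin 3 → ℝ := ![1 - q.1 - q.2, q.1, q.2]

theorem measurable_baryCoord (j : Fin 3) : Measurable fun q => baryCoord q j := by
  fin_cases j <;>
    simp only [baryCoord, Fin.zero_eta, Fin.mk_one, Fin.reduceFinMk, Fin.isValue,
      Matrix.cons_val_zero, Matrix.cons_val_one, Matrix.cons_val] <;> fun_prop

theorem baryCoord_mem_Ioo {q : ℝ × ℝ} (hq : q ∈ openTriangle 1) (j : Fin 3) :
    baryCoord q j ∈ Ioo 0 1 := by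
  obtain ⟨h1, h2, h⟩ := hq
  fin_cases j <;>
    simp only [baryCoord, Fin.zero_eta, Fin.mk_one, Fin.reduceFinMk, Fin.isValue,
      Matrix.cons_val_zero, Matrix.cons_val_one, Matrix.cons_val, mem_Ioo] <;>
    constructor <;> linarith

noncomputable def baryWeight (a c : Fin 3 → ℝ) (q : ℝ × ℝ) : ℝ :=
  ∏ j, baryCoord q j ^ a j * (1 - baryCoord q j) ^ c j

def vertexRegion (j : Fin 3) : Set (ℝ × ℝ) := openTriangle 1 ∩ {q | 1 / 4 < baryCoord q j}

theorem vertexRegion_zero : vertexRegion 0 = openTriangle (3 / 4) := by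
  ext q
  simp only [vertexRegion, openTriangle, baryCoord, mem_inter_iff, mem_ofPred_eq,
    Matrix.cons_val_zero]
  constructor
  · rintro ⟨⟨h1, h2, -⟩, h⟩
    exact ⟨h1, h2, by linarith⟩
  · rintro ⟨h1, h2, h⟩
    exact ⟨⟨h1, h2, by linarith⟩, by linarith⟩

theorem iUnion_vertexRegion : ⋃ j, vertexRegion j = openTriangle 1 := by
  refine Subset.antisymm (iUnion_subset fun j => inter_subset_left) fun q hq => ?_
  by_contra h
  simp only [vertexRegion, mem_iUnion, mem_inter_iff, mem_ofPred_eq, not_exists, not_and,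
    not_lt] at h
  have h0 := h 0 hq
  have h1 := h 1 hq
  have h2 := h 2 hq
  simp only [baryCoord, Matrix.cons_val] at h0 h1 h2
  linarith

theorem integrableOn_baryWeight_vertexRegion_zero_iff {a : Fin 3 → ℝ} (ha : ∀ j, 0 ≤ a j)
    (c : Fin 3 → ℝ) :
    IntegrableOn (baryWeight a c) (vertexRegion 0) ↔ -2 < a 1 + a 2 + c 0 := by
  set u : ℝ × ℝ → ℝ := fun q => (1 - q.1 - q.2) ^ a 0 * (1 - q.1) ^ c 1 * (1 - q.2) ^ c 2
  have hsplit : baryWeight a c = fun q => q.1 ^ a 1 * q.2 ^ a 2 * (q.1 + q.2) ^ c 0 * u q := by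
    ext q
    simp only [baryWeight, baryCoord, Fin.prod_univ_three, u, Matrix.cons_val]
    rw [show 1 - (1 - q.1 - q.2) = q.1 + q.2 by ring]
    ring
  have hK : ∀ q ∈ closedTriangle (3 / 4), 0 < 1 - q.1 - q.2 ∧ 0 < 1 - q.1 ∧ 0 < 1 - q.2 := by
    rintro q ⟨h1, h2, h⟩
    exact ⟨by linarith, by linarith, by linarith⟩
  have hu : ContinuousOn u (closedTriangle (3 / 4)) :=
    ((ContinuousOn.rpow_const (by fun_prop) fun q hq => Or.inl (hK q hq).1.ne').mul
      (ContinuousOn.rpow_const (by fun_prop) fun q hq => Or.inl (hK q hq).2.1.ne')).mul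
      (ContinuousOn.rpow_const (by fun_prop) fun q hq => Or.inl (hK q hq).2.2.ne')
  have hu0 : ∀ q ∈ closedTriangle (3 / 4), u q ≠ 0 := by
    intro q hq
    obtain ⟨h0, h1, h2⟩ := hK q hq
    positivity
  rw [hsplit, vertexRegion_zero, integrableOn_mul_iff_of_continuousOn hu hu0
    (isCompact_closedTriangle _) (measurableSet_openTriangle _)
    (openTriangle_subset_closedTriangle _),
    integrableOn_openTriangle_rpow_iff (by norm_num) (ha 1) (ha 2)]

def triangleRotation : ℝ × ℝ ≃ₜ ℝ × ℝ where
  toFun q := (q.2, 1 - q.1 - q.2)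
  invFun q := (1 - q.1 - q.2, q.1)
  left_inv q := Prod.ext (by ring) rfl
  right_inv q := Prod.ext rfl (by ring)
  continuous_toFun := by fun_prop
  continuous_invFun := by fun_prop

@[simp]
theorem triangleRotation_apply (q : ℝ × ℝ) : triangleRotation q = (q.2, 1 - q.1 - q.2) := rfl

theorem measurePreserving_triangleRotation : MeasurePreserving triangleRotation := by
  set L := Matrix.toLin (Module.Basis.finTwoProd ℝ) (Module.Basis.finTwoProd ℝ) !![0, 1; -1, -1]
  have hL : LinearMap.det L = 1 := by simp [L, LinearMap.det_toLin]
  have hrot : (triangleRotation : ℝ × ℝ → ℝ × ℝ) = (fun v => ((0 : ℝ), (1 : ℝ)) + v) ∘ L := by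
    ext q <;> simp only [triangleRotation_apply, Function.comp_apply, Matrix.toLin_finTwoProd_apply,
      Prod.mk_add_mk, L] <;> ring
  rw [hrot]
  refine (measurePreserving_add_left volume _).comp
    ⟨L.continuous_of_finiteDimensional.measurable, ?_⟩
  rw [Measure.map_linearMap_addHaar_eq_smul_addHaar volume (by rw [hL]; norm_num), hL]
  simp

theorem baryCoord_triangleRotation (q : ℝ × ℝ) (j : Fin 3) :
    baryCoord (triangleRotation q) j = baryCoord q (j + 1) := by
  fin_cases j <;> simp [baryCoord]

theorem preimage_triangleRotation_openTriangle :
    triangleRotation ⁻¹' openTriangle 1 = openTriangle 1 := by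
  ext q
  simp only [openTriangle, mem_preimage, triangleRotation_apply, mem_ofPred_eq]
  constructor <;> rintro ⟨h1, h2, h3⟩ <;> refine ⟨?_, ?_, ?_⟩ <;> linarith

theorem preimage_triangleRotation_vertexRegion (j : Fin 3) :
    triangleRotation ⁻¹' vertexRegion j = vertexRegion (j + 1) := by
  simp only [vertexRegion, preimage_inter, preimage_triangleRotation_openTriangle]
  ext q
  simp only [mem_inter_iff, mem_preimage, mem_ofPred_eq, baryCoord_triangleRotation]

theorem baryWeight_comp_triangleRotation (a c : Fin 3 → ℝ) :
    baryWeight (fun j => a (j + 1)) (fun j => c (j + 1)) ∘ triangleRotation = baryWeight a c := by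
  ext q
  simp only [Function.comp_apply, baryWeight, baryCoord_triangleRotation]
  exact Equiv.prod_comp (Equiv.addRight 1) fun j => baryCoord q j ^ a j * (1 - baryCoord q j) ^ c j

theorem integrableOn_baryWeight_vertexRegion_add_one_iff (a c : Fin 3 → ℝ) (j : Fin 3) :
    IntegrableOn (baryWeight a c) (vertexRegion (j + 1)) ↔
      IntegrableOn (baryWeight (fun k => a (k + 1)) (fun k => c (k + 1))) (vertexRegion j) := by
  rw [← preimage_triangleRotation_vertexRegion, ← baryWeight_comp_triangleRotation]
  exact measurePreserving_triangleRotation.integrableOn_comp_preimage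
    triangleRotation.measurableEmbedding

theorem integrableOn_baryWeight_vertexRegion_iff {a : Fin 3 → ℝ} (ha : ∀ j, 0 ≤ a j)
    (c : Fin 3 → ℝ) (j : Fin 3) :
    IntegrableOn (baryWeight a c) (vertexRegion j) ↔ -2 < ∑ k, a k - a j + c j := by
  have h0 : ∀ a c : Fin 3 → ℝ, (∀ j, 0 ≤ a j) →
      (IntegrableOn (baryWeight a c) (vertexRegion 0) ↔ -2 < ∑ k, a k - a 0 + c 0) := by
    intro a c ha
    rw [integrableOn_baryWeight_vertexRegion_zero_iff ha, Fin.sum_univ_three]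
    ring_nf
  have hsum : ∀ a : Fin 3 → ℝ, ∑ k, a (k + 1) = ∑ k, a k :=
    fun a => Equiv.sum_comp (Equiv.addRight 1) a
  obtain rfl | rfl | rfl : j = 0 ∨ j = 0 + 1 ∨ j = 0 + 1 + 1 := by fin_cases j <;> decide
  · exact h0 a c ha
  · rw [integrableOn_baryWeight_vertexRegion_add_one_iff, h0 _ _ fun k => ha _, hsum]
  · rw [integrableOn_baryWeight_vertexRegion_add_one_iff,
      integrableOn_baryWeight_vertexRegion_add_one_iff, h0 _ _ fun k => ha _,
      hsum (fun k => a (k + 1)), hsum]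

theorem integrableOn_baryWeight_iff {a : Fin 3 → ℝ} (ha : ∀ j, 0 ≤ a j) (c : Fin 3 → ℝ) :
    IntegrableOn (baryWeight a c) (openTriangle 1) ↔ ∀ j, -2 < ∑ k, a k - a j + c j := by
  simp only [← iUnion_vertexRegion, integrableOn_finite_iUnion,
    integrableOn_baryWeight_vertexRegion_iff ha]

noncomputable def baryRational (α β : Fin 3 → ℕ) (q : ℝ × ℝ) : ℝ :=
  (∏ j, baryCoord q j ^ α j) / ∏ j, (1 - baryCoord q j) ^ β j

theorem measurable_baryRational (α β : Fin 3 → ℕ) : Measurable (baryRational α β) :=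
  (Finset.measurable_prod _ fun j _ => (measurable_baryCoord j).pow_const _).div
    (Finset.measurable_prod _ fun j _ =>
      (measurable_const.sub (measurable_baryCoord j)).pow_const _)

theorem abs_baryRational_rpow {q : ℝ × ℝ} (hq : q ∈ openTriangle 1) (α β : Fin 3 → ℕ) (p : ℝ) :
    |baryRational α β q| ^ p = baryWeight (fun j => α j * p) (fun j => -(β j * p)) q := by
  have hpos : ∀ j, 0 < baryCoord q j := fun j => (baryCoord_mem_Ioo hq j).1
  have hpos' : ∀ j, 0 < 1 - baryCoord q j := fun j => sub_pos.2 (baryCoord_mem_Ioo hq j).2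
  have hfactor : ∀ j, 0 ≤ baryCoord q j ^ α j / (1 - baryCoord q j) ^ β j := fun j =>
    div_nonneg (pow_nonneg (hpos j).le _) (pow_nonneg (hpos' j).le _)
  rw [baryRational, ← Finset.prod_div_distrib,
    abs_of_nonneg (Finset.prod_nonneg fun j _ => hfactor j),
    ← Real.finsetProd_rpow _ _ fun j _ => hfactor j, baryWeight]
  refine Finset.prod_congr rfl fun j _ => ?_
  rw [Real.div_rpow (pow_nonneg (hpos j).le _) (pow_nonneg (hpos' j).le _), ← Real.rpow_natCast,
    ← Real.rpow_natCast, ← Real.rpow_mul (hpos j).le, ← Real.rpow_mul (hpos' j).le,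
    Real.rpow_neg (hpos' j).le, div_eq_mul_inv]

theorem integrableOn_abs_baryRational_rpow_iff (α β : Fin 3 → ℕ) {p : ℝ} (hp : 0 ≤ p) :
    IntegrableOn (fun q => |baryRational α β q| ^ p) (openTriangle 1) ↔
      ∀ j, -2 < p * (∑ k, (α k : ℝ) - (α j + β j)) := by
  rw [integrableOn_congr_fun (fun q hq => abs_baryRational_rpow hq α β p)
    (measurableSet_openTriangle 1), integrableOn_baryWeight_iff fun j => by positivity]
  refine forall_congr' fun j => ?_
  rw [← Finset.sum_mul]
  ring_nf

theorem lt_mul_sub_max_iff {p : ℝ} (hp : 0 ≤ p) (b n x y : ℝ) :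
    b < p * (n - max x y) ↔ b < p * (n - x) ∧ b < p * (n - y) := by
  have : Antitone fun m => p * (n - m) := fun x y h => mul_le_mul_of_nonneg_left (by linarith) hp
  rw [this.map_max, lt_min_iff]

theorem baryRational_apply (α₀ α₁ α₂ β₀ β₁ β₂ : ℕ) (q : ℝ × ℝ) :
    baryRational ![α₀, α₁, α₂] ![β₀, β₁, β₂] q = (1 - q.1 - q.2) ^ α₀ * q.1 ^ α₁ * q.2 ^ α₂ /
      ((q.1 + q.2) ^ β₀ * (1 - q.1) ^ β₁ * (1 - q.2) ^ β₂) := by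
  simp only [baryRational, baryCoord, Fin.prod_univ_three, Matrix.cons_val]
  ring_nf

theorem integrableOn_abs_baryRational_rpow_iff_max (α₀ α₁ α₂ β₀ β₁ β₂ : ℕ) {p : ℝ}
    (hp : 0 ≤ p) :
    IntegrableOn (fun q => |baryRational ![α₀, α₁, α₂] ![β₀, β₁, β₂] q| ^ p) (openTriangle 1) ↔
      p * ((((α₀ : ℤ) + α₁ + α₂) -
        max ((α₀ : ℤ) + β₀) (max ((α₁ : ℤ) + β₁) ((α₂ : ℤ) + β₂)) : ℤ) : ℝ) > -2 := by
  rw [integrableOn_abs_baryRational_rpow_iff _ _ hp, gt_iff_lt]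
  push_cast
  rw [lt_mul_sub_max_iff hp, lt_mul_sub_max_iff hp]
  simp [Fin.forall_fin_succ, Fin.sum_univ_three, add_assoc]

/-- `L^p`-integrability of `R^α_β` over the (interior of the) standard triangle:
`∫ |R^α_β|^p < ∞` iff `p (|α| − ‖α+β‖_∞) > −2`; in particular `R^α_β` is Lebesgue
integrable on `T` iff `‖α+β‖_∞ ≤ |α| + 1`. -/
theorem rational_Lp_integrability (α₀ α₁ α₂ β₀ β₁ β₂ : ℕ) (p : ℝ) (hp : 1 ≤ p) :
    (IntegrableOn
        (fun q : ℝ × ℝ =>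
          |(1 - q.1 - q.2) ^ α₀ * q.1 ^ α₁ * q.2 ^ α₂ /
              ((q.1 + q.2) ^ β₀ * (1 - q.1) ^ β₁ * (1 - q.2) ^ β₂)| ^ p)
        {q : ℝ × ℝ | 0 < q.1 ∧ 0 < q.2 ∧ q.1 + q.2 < 1} ↔
      p * ((((α₀ : ℤ) + α₁ + α₂) -
          max ((α₀ : ℤ) + β₀) (max ((α₁ : ℤ) + β₁) ((α₂ : ℤ) + β₂)) : ℤ) : ℝ) > -2) ∧
    (IntegrableOn
        (fun q : ℝ × ℝ =>
          (1 - q.1 - q.2) ^ α₀ * q.1 ^ α₁ * q.2 ^ α₂ /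
            ((q.1 + q.2) ^ β₀ * (1 - q.1) ^ β₁ * (1 - q.2) ^ β₂))
        {q : ℝ × ℝ | 0 ≤ q.1 ∧ 0 ≤ q.2 ∧ q.1 + q.2 ≤ 1} ↔
      max (α₀ + β₀) (max (α₁ + β₁) (α₂ + β₂)) ≤ α₀ + α₁ + α₂ + 1) := by
  simp only [← baryRational_apply]
  refine ⟨integrableOn_abs_baryRational_rpow_iff_max _ _ _ _ _ _ (by linarith), ?_⟩
  have hL1 := integrableOn_abs_baryRational_rpow_iff_max α₀ α₁ α₂ β₀ β₁ β₂ zero_le_one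
  simp only [Real.rpow_one, ← Real.norm_eq_abs, one_mul] at hL1
  change IntegrableOn _ (closedTriangle 1) ↔ _
  rw [integrableOn_congr_set_ae (closedTriangle_ae_eq_openTriangle 1), IntegrableOn,
    ← integrable_norm_iff (measurable_baryRational _ _).aestronglyMeasurable, ← IntegrableOn,
    hL1, gt_iff_lt, show (-2 : ℝ) = ((-2 : ℤ) : ℝ) by norm_num, Int.cast_lt]
  omega
end

section
/- Let α, β ∈ ℕ³. The function R^α_β is bounded on the interior of the standard triangle T if and only if max_j(α_j+β_j) ≤ α₀+α₁+α₂. -/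
/-- Sorted case of the boundedness estimate. -/
lemma key_sorted (a b c : ℝ) (p q r u v w : ℕ)
    (ha : 0 < a) (hb : 0 < b) (hc : 0 < c) (hs : a + b + c = 1)
    (hab : a ≤ b) (hbc : b ≤ c) (hw : w ≤ p + q) :
    a ^ p * b ^ q * c ^ r ≤ 3 ^ (u + v + w) * ((1 - a) ^ u * (1 - b) ^ v * (1 - c) ^ w) := by
  have hb1 : b ≤ 1 := by linarith
  have hc3 : (1 : ℝ) / 3 ≤ c := by linarith
  have h1a : (1 : ℝ) / 3 ≤ 1 - a := by linarith
  have h1b : (1 : ℝ) / 3 ≤ 1 - b := by linarith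
  have h1c : b ≤ 1 - c := by linarith
  have step1 : a ^ p * b ^ q * c ^ r ≤ b ^ w := by
    have h1 : a ^ p ≤ b ^ p := pow_le_pow_left₀ ha.le hab p
    have h2 : c ^ r ≤ 1 := pow_le_one₀ hc.le (by linarith)
    calc a ^ p * b ^ q * c ^ r ≤ b ^ p * b ^ q * 1 := by
          apply mul_le_mul (mul_le_mul h1 le_rfl (by positivity) (by positivity)) h2
            (by positivity) (by positivity)
      _ = b ^ (p + q) := by rw [pow_add, mul_one]
      _ ≤ b ^ w := pow_le_pow_of_le_one hb.le hb1 hw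
  have e1 : (3 : ℝ) ^ u * (1 / 3) ^ u = 1 := by rw [← mul_pow]; norm_num
  have e2 : (3 : ℝ) ^ v * (1 / 3) ^ v = 1 := by rw [← mul_pow]; norm_num
  have h3w : (1 : ℝ) ≤ 3 ^ w := by
    have := pow_le_pow_left₀ (by norm_num : (0:ℝ) ≤ 1) (by norm_num : (1:ℝ) ≤ 3) w
    simpa using this
  have step2 : b ^ w ≤ 3 ^ (u + v + w) * ((1 - a) ^ u * (1 - b) ^ v * (1 - c) ^ w) := by
    calc b ^ w ≤ 3 ^ w * b ^ w := le_mul_of_one_le_left (by positivity) h3w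
      _ = 3 ^ (u + v + w) * ((1 / 3) ^ u * (1 / 3) ^ v * b ^ w) := by
          rw [pow_add, pow_add]
          calc (3:ℝ) ^ w * b ^ w
              = (3 ^ u * (1/3) ^ u) * ((3 ^ v * (1/3) ^ v) * (3 ^ w * b ^ w)) := by
                rw [e1, e2]; ring
            _ = 3 ^ u * 3 ^ v * 3 ^ w * ((1/3) ^ u * (1/3) ^ v * b ^ w) := by ring
      _ ≤ 3 ^ (u + v + w) * ((1 - a) ^ u * (1 - b) ^ v * (1 - c) ^ w) := by
          gcongr <;> first | positivity | linarith
  exact step1.trans step2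

/-- Boundedness under the max condition, symmetric form. -/
lemma bdd_symm (α₀ α₁ α₂ β₀ β₁ β₂ : ℕ)
    (h0 : β₀ ≤ α₁ + α₂) (h1 : β₁ ≤ α₀ + α₂) (h2 : β₂ ≤ α₀ + α₁)
    (a b c : ℝ) (ha : 0 < a) (hb : 0 < b) (hc : 0 < c) (hs : a + b + c = 1) :
    a ^ α₀ * b ^ α₁ * c ^ α₂ ≤
      3 ^ (β₀ + β₁ + β₂) * ((1 - a) ^ β₀ * (1 - b) ^ β₁ * (1 - c) ^ β₂) := by
  rcases le_total a b with hab | hab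
  · rcases le_total b c with hbc | hbc
    · exact key_sorted a b c α₀ α₁ α₂ β₀ β₁ β₂ ha hb hc hs hab hbc (by omega)
    · rcases le_total a c with hac | hac
      · have hkey := key_sorted a c b α₀ α₂ α₁ β₀ β₂ β₁ ha hc hb (by linarith) hac hbc (by omega)
        calc a ^ α₀ * b ^ α₁ * c ^ α₂ = a ^ α₀ * c ^ α₂ * b ^ α₁ := by ring
          _ ≤ 3 ^ (β₀ + β₂ + β₁) * ((1 - a) ^ β₀ * (1 - c) ^ β₂ * (1 - b) ^ β₁) := hkey
          _ = 3 ^ (β₀ + β₁ + β₂) * ((1 - a) ^ β₀ * (1 - b) ^ β₁ * (1 - c) ^ β₂) := by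
              rw [show β₀ + β₂ + β₁ = β₀ + β₁ + β₂ from by omega]; ring
      · have hkey := key_sorted c a b α₂ α₀ α₁ β₂ β₀ β₁ hc ha hb (by linarith) hac hab (by omega)
        calc a ^ α₀ * b ^ α₁ * c ^ α₂ = c ^ α₂ * a ^ α₀ * b ^ α₁ := by ring
          _ ≤ 3 ^ (β₂ + β₀ + β₁) * ((1 - c) ^ β₂ * (1 - a) ^ β₀ * (1 - b) ^ β₁) := hkey
          _ = 3 ^ (β₀ + β₁ + β₂) * ((1 - a) ^ β₀ * (1 - b) ^ β₁ * (1 - c) ^ β₂) := by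
              rw [show β₂ + β₀ + β₁ = β₀ + β₁ + β₂ from by omega]; ring
  · rcases le_total a c with hac | hac
    · have hkey := key_sorted b a c α₁ α₀ α₂ β₁ β₀ β₂ hb ha hc (by linarith) hab hac (by omega)
      calc a ^ α₀ * b ^ α₁ * c ^ α₂ = b ^ α₁ * a ^ α₀ * c ^ α₂ := by ring
        _ ≤ 3 ^ (β₁ + β₀ + β₂) * ((1 - b) ^ β₁ * (1 - a) ^ β₀ * (1 - c) ^ β₂) := hkey
        _ = 3 ^ (β₀ + β₁ + β₂) * ((1 - a) ^ β₀ * (1 - b) ^ β₁ * (1 - c) ^ β₂) := by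
            rw [show β₁ + β₀ + β₂ = β₀ + β₁ + β₂ from by omega]; ring
    · rcases le_total b c with hbc | hbc
      · have hkey := key_sorted b c a α₁ α₂ α₀ β₁ β₂ β₀ hb hc ha (by linarith) hbc hac (by omega)
        calc a ^ α₀ * b ^ α₁ * c ^ α₂ = b ^ α₁ * c ^ α₂ * a ^ α₀ := by ring
          _ ≤ 3 ^ (β₁ + β₂ + β₀) * ((1 - b) ^ β₁ * (1 - c) ^ β₂ * (1 - a) ^ β₀) := hkey
          _ = 3 ^ (β₀ + β₁ + β₂) * ((1 - a) ^ β₀ * (1 - b) ^ β₁ * (1 - c) ^ β₂) := by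
              rw [show β₁ + β₂ + β₀ = β₀ + β₁ + β₂ from by omega]; ring
      · have hkey := key_sorted c b a α₂ α₁ α₀ β₂ β₁ β₀ hc hb ha (by linarith) hbc hab (by omega)
        calc a ^ α₀ * b ^ α₁ * c ^ α₂ = c ^ α₂ * b ^ α₁ * a ^ α₀ := by ring
          _ ≤ 3 ^ (β₂ + β₁ + β₀) * ((1 - c) ^ β₂ * (1 - b) ^ β₁ * (1 - a) ^ β₀) := hkey
          _ = 3 ^ (β₀ + β₁ + β₂) * ((1 - a) ^ β₀ * (1 - b) ^ β₁ * (1 - c) ^ β₂) := by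
              rw [show β₂ + β₁ + β₀ = β₀ + β₁ + β₂ from by omega]; ring

/-- Unboundedness near a vertex, symmetric form. -/
lemma unbdd (p q r u v w : ℕ) (h : q + r < u) (C : ℝ) :
    ∃ a b c : ℝ, 0 < a ∧ 0 < b ∧ 0 < c ∧ a + b + c = 1 ∧
      C * ((1 - a) ^ u * (1 - b) ^ v * (1 - c) ^ w) < a ^ p * b ^ q * c ^ r := by
  have hCpos : (0 : ℝ) < |C| + 1 := by positivity
  set t : ℝ := min (1/4) (1 / (2 ^ (u + p) * (|C| + 1))) with ht
  have ht0 : 0 < t := lt_min (by norm_num) (by positivity)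
  have ht4 : t ≤ 1/4 := min_le_left _ _
  have htC : t ≤ 1 / (2 ^ (u + p) * (|C| + 1)) := min_le_right _ _
  have ht1 : t ≤ 1 := by linarith
  refine ⟨1 - 2 * t, t, t, by linarith, ht0, ht0, by ring, ?_⟩
  rw [show (1 : ℝ) - (1 - 2 * t) = 2 * t from by ring]
  have ha2 : (1 : ℝ) / 2 ≤ 1 - 2 * t := by linarith
  -- strict key inequality
  have h2p : (0 : ℝ) < 2 ^ p := by positivity
  have habs : |C| * 2 ^ (u + p) * t < 1 := by
    have h1 : |C| * 2 ^ (u + p) * t ≤ |C| * 2 ^ (u + p) * (1 / (2 ^ (u + p) * (|C| + 1))) :=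
      mul_le_mul_of_nonneg_left htC (by positivity)
    have h2 : |C| * 2 ^ (u + p) * (1 / (2 ^ (u + p) * (|C| + 1))) = |C| / (|C| + 1) := by
      field_simp
    have h3 : |C| / (|C| + 1) < 1 := (div_lt_one hCpos).mpr (by linarith [abs_nonneg C])
    calc |C| * 2 ^ (u + p) * t ≤ |C| / (|C| + 1) := h2 ▸ h1
      _ < 1 := h3
  have hkey : |C| * 2 ^ u * t < (1/2 : ℝ) ^ p := by
    rw [div_pow, one_pow, lt_div_iff₀ h2p]
    calc |C| * 2 ^ u * t * 2 ^ p = |C| * 2 ^ (u + p) * t := by rw [pow_add]; ring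
      _ < 1 := habs
  have h1t : (0:ℝ) < 1 - t := by linarith
  have hvw : (1 - t) ^ v * (1 - t) ^ w ≤ 1 := by
    calc (1 - t) ^ v * (1 - t) ^ w = (1 - t) ^ (v + w) := (pow_add _ _ _).symm
      _ ≤ 1 := pow_le_one₀ (by linarith) (by linarith)
  have stepA : C * ((2 * t) ^ u * (1 - t) ^ v * (1 - t) ^ w) ≤ |C| * (2 * t) ^ u := by
    have hX : (2 * t) ^ u * (1 - t) ^ v * (1 - t) ^ w ≤ (2 * t) ^ u := by
      calc (2 * t) ^ u * (1 - t) ^ v * (1 - t) ^ w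
          = (2 * t) ^ u * ((1 - t) ^ v * (1 - t) ^ w) := by ring
        _ ≤ (2 * t) ^ u * 1 := mul_le_mul_of_nonneg_left hvw (by positivity)
        _ = (2 * t) ^ u := mul_one _
    calc C * ((2 * t) ^ u * (1 - t) ^ v * (1 - t) ^ w)
        ≤ |C| * ((2 * t) ^ u * (1 - t) ^ v * (1 - t) ^ w) :=
          mul_le_mul_of_nonneg_right (le_abs_self C) (by positivity)
      _ ≤ |C| * (2 * t) ^ u := mul_le_mul_of_nonneg_left hX (abs_nonneg C)
  have htqr : (0 : ℝ) < t ^ q * t ^ r := by positivity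
  calc C * ((2 * t) ^ u * (1 - t) ^ v * (1 - t) ^ w)
      ≤ |C| * (2 * t) ^ u := stepA
    _ = |C| * 2 ^ u * t ^ u := by rw [mul_pow]; ring
    _ ≤ |C| * 2 ^ u * t ^ (q + r + 1) := by
        apply mul_le_mul_of_nonneg_left (pow_le_pow_of_le_one ht0.le ht1 (by omega))
          (by positivity)
    _ = (|C| * 2 ^ u * t) * (t ^ q * t ^ r) := by rw [pow_add, pow_add]; ring
    _ < (1/2 : ℝ) ^ p * (t ^ q * t ^ r) := by
        exact mul_lt_mul_of_pos_right hkey htqr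
    _ ≤ (1 - 2 * t) ^ p * (t ^ q * t ^ r) := by
        apply mul_le_mul_of_nonneg_right (pow_le_pow_left₀ (by norm_num) ha2 p) htqr.le
    _ = (1 - 2 * t) ^ p * t ^ q * t ^ r := by ring

lemma le_of_abs_div (x y C : ℝ) (hx : 0 ≤ x) (hy : 0 < y) (h : |x / y| ≤ C) : x ≤ C * y := by
  rw [abs_of_nonneg (div_nonneg hx hy.le), div_le_iff₀ hy] at h
  exact h

/-- Boundedness of `R^α_β` on the interior of the standard triangle iff
`‖α+β‖_∞ ≤ |α|`. -/
theorem rational_bounded_iff (α₀ α₁ α₂ β₀ β₁ β₂ : ℕ) :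
    (∃ C : ℝ, ∀ q : ℝ × ℝ, 0 < q.1 → 0 < q.2 → q.1 + q.2 < 1 →
        |(1 - q.1 - q.2) ^ α₀ * q.1 ^ α₁ * q.2 ^ α₂ /
            ((q.1 + q.2) ^ β₀ * (1 - q.1) ^ β₁ * (1 - q.2) ^ β₂)| ≤ C) ↔
      max (α₀ + β₀) (max (α₁ + β₁) (α₂ + β₂)) ≤ α₀ + α₁ + α₂ := by
  constructor
  · rintro ⟨C, hC⟩
    by_contra hmax
    -- symmetric form of the bound
    have hC' : ∀ a b c : ℝ, 0 < a → 0 < b → 0 < c → a + b + c = 1 →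
        a ^ α₀ * b ^ α₁ * c ^ α₂ ≤
          C * ((1 - a) ^ β₀ * (1 - b) ^ β₁ * (1 - c) ^ β₂) := by
      intro a b c ha hb hc hs
      have h1 : |(1 - b - c) ^ α₀ * b ^ α₁ * c ^ α₂ /
          ((b + c) ^ β₀ * (1 - b) ^ β₁ * (1 - c) ^ β₂)| ≤ C :=
        hC (b, c) hb hc (by linarith)
      rw [show (1 : ℝ) - b - c = a from by linarith,
        show b + c = 1 - a from by linarith] at h1
      have h1b : (0:ℝ) < 1 - b := by linarith
      have h1c : (0:ℝ) < 1 - c := by linarith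
      have h1a : (0:ℝ) < 1 - a := by linarith
      exact le_of_abs_div _ _ _ (by positivity) (by positivity) h1
    have hd : (α₀ + α₁ + α₂ < α₀ + β₀) ∨ (α₀ + α₁ + α₂ < α₁ + β₁) ∨
        (α₀ + α₁ + α₂ < α₂ + β₂) := by
      by_contra hd
      push_neg at hd
      exact hmax (by simp only [max_le_iff]; omega)
    rcases hd with hd | hd | hd
    · obtain ⟨a, b, c, ha, hb, hc, hs, hlt⟩ := unbdd α₀ α₁ α₂ β₀ β₁ β₂ (by omega) C
      have := hC' a b c ha hb hc hs
      linarith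
    · obtain ⟨a, b, c, ha, hb, hc, hs, hlt⟩ := unbdd α₁ α₀ α₂ β₁ β₀ β₂ (by omega) C
      have h2 := hC' b a c hb ha hc (by linarith)
      nlinarith [h2, hlt]
    · obtain ⟨a, b, c, ha, hb, hc, hs, hlt⟩ := unbdd α₂ α₀ α₁ β₂ β₀ β₁ (by omega) C
      have h2 := hC' b c a hb hc ha (by linarith)
      nlinarith [h2, hlt]
  · intro h
    have h0 : β₀ ≤ α₁ + α₂ := by omega
    have h1 : β₁ ≤ α₀ + α₂ := by omega
    have h2 : β₂ ≤ α₀ + α₁ := by omega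
    refine ⟨(3 : ℝ) ^ (β₀ + β₁ + β₂), ?_⟩
    rintro ⟨x, y⟩ hx hy hxy
    simp only at hx hy hxy ⊢
    have ha : (0:ℝ) < 1 - x - y := by linarith
    have h1x : (0:ℝ) < 1 - x := by linarith
    have h1y : (0:ℝ) < 1 - y := by linarith
    have hxy0 : (0:ℝ) < x + y := by linarith
    have hnum : (0:ℝ) ≤ (1 - x - y) ^ α₀ * x ^ α₁ * y ^ α₂ := by positivity
    have hden : (0:ℝ) < (x + y) ^ β₀ * (1 - x) ^ β₁ * (1 - y) ^ β₂ := by positivity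
    rw [abs_of_nonneg (div_nonneg hnum hden.le), div_le_iff₀ hden]
    have := bdd_symm α₀ α₁ α₂ β₀ β₁ β₂ h0 h1 h2 (1 - x - y) x y ha hx hy (by ring)
    rw [show (1 : ℝ) - (1 - x - y) = x + y from by ring] at this
    exact this
end

section
/- Let α, β ∈ ℕ³ with β_j ≥ 1 for j = 0,1,2 and ‖α+β‖_∞ ≤ |α| + 1. Then R^α_β and R^α_{β−e_j} for j = 0,1,2 are all Lebesgue integrable on T, and ∫_T R^α_β d(x,y) = (1/2) · (∫_T R^α_{β−e₀} d(x,y) + ∫_T R^α_{β−e₁} d(x,y) + ∫_T R^α_{β−e₂} d(x,y)). -/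
/-!
On the triangle `R^α_{β-eⱼ} = (1 - λⱼ) R^α_β`, and `(1 - λ₀) + (1 - λ₁) + (1 - λ₂) = 2`, so the
identity is linearity of the integral once the four functions are integrable. For integrability,
`λⱼ ≤ (1 - λₖ)(1 - λₗ)` and `‖α + β‖_∞ ≤ |α| + 1` give `0 ≤ R^α_β ≤ ((1 - λ₀)(1 - λ₁)(1 - λ₂))⁻¹`,
which in turn is at most `2 w(x) w(y)` with `w(t) = t^{-1/2} + (1 - t)^{-1/2}`, integrable on the
unit square. All pointwise statements are needed only off the null lines `x = 0` and `y = 0`.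
-/

open MeasureTheory

/-- The rational function `R^α_β` on the standard triangle, in the coordinates
`λ₀ = 1-x-y`, `λ₁ = x`, `λ₂ = y` (so `1-λ₀ = x+y`, `1-λ₁ = 1-x`, `1-λ₂ = 1-y`). -/
noncomputable def ratR (α₀ α₁ α₂ β₀ β₁ β₂ : ℕ) (q : ℝ × ℝ) : ℝ :=
  (1 - q.1 - q.2) ^ α₀ * q.1 ^ α₁ * q.2 ^ α₂ /
    ((q.1 + q.2) ^ β₀ * (1 - q.1) ^ β₁ * (1 - q.2) ^ β₂)

/-- The standard triangle `T ⊂ ℝ²`. -/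
def stdTri : Set (ℝ × ℝ) := {q | 0 ≤ q.1 ∧ 0 ≤ q.2 ∧ q.1 + q.2 ≤ 1}

open Set

lemma measurableSet_stdTri : MeasurableSet stdTri := by
  unfold stdTri; measurability

lemma stdTri_subset_Icc_prod_Icc : stdTri ⊆ Icc 0 1 ×ˢ Icc 0 1 :=
  fun _ ⟨hx, hy, hxy⟩ ↦ ⟨⟨hx, by linarith⟩, ⟨hy, by linarith⟩⟩

lemma ae_restrict_stdTri_pos :
    ∀ᵐ q ∂volume.restrict stdTri, 0 < q.1 ∧ 0 < q.2 ∧ q.1 + q.2 ≤ 1 := by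
  have h₁ : ∀ᵐ q : ℝ × ℝ, q.1 ≠ 0 := by
    rw [Measure.volume_eq_prod]
    exact Measure.quasiMeasurePreserving_fst.ae (Measure.ae_ne volume 0)
  have h₂ : ∀ᵐ q : ℝ × ℝ, q.2 ≠ 0 := by
    rw [Measure.volume_eq_prod]
    exact Measure.quasiMeasurePreserving_snd.ae (Measure.ae_ne volume 0)
  filter_upwards [ae_restrict_mem measurableSet_stdTri, ae_restrict_of_ae h₁,
    ae_restrict_of_ae h₂] with q ⟨hx, hy, hxy⟩ hx₀ hy₀
  exact ⟨hx.lt_of_ne' hx₀, hy.lt_of_ne' hy₀, hxy⟩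

noncomputable def edgeWeight (t : ℝ) : ℝ := t ^ (-(1 / 2) : ℝ) + (1 - t) ^ (-(1 / 2) : ℝ)

lemma integrableOn_edgeWeight : IntegrableOn edgeWeight (Icc 0 1) := by
  have h : IntervalIntegrable (fun t : ℝ ↦ t ^ (-(1 / 2) : ℝ)) volume 0 1 :=
    intervalIntegral.intervalIntegrable_rpow' (by norm_num)
  have h' : IntervalIntegrable (fun t : ℝ ↦ (1 - t) ^ (-(1 / 2) : ℝ)) volume 0 1 := by
    simpa using (h.comp_sub_left 1).symm
  exact (intervalIntegrable_iff_integrableOn_Icc_of_le zero_le_one).1 (h.add h')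

lemma inv_sqrt_mul_one_sub_le_edgeWeight {t : ℝ} (h₀ : 0 < t) (h₁ : t < 1) :
    (√(t * (1 - t)))⁻¹ ≤ edgeWeight t := by
  have h₁' : 0 < 1 - t := by linarith
  have hs : 1 ≤ √t + √(1 - t) := by
    have : t ≤ √t := Real.le_sqrt_of_sq_le (by nlinarith)
    have : 1 - t ≤ √(1 - t) := Real.le_sqrt_of_sq_le (by nlinarith)
    linarith
  have hs₀ := (Real.sqrt_pos.2 h₀).ne'
  have hs₁ := (Real.sqrt_pos.2 h₁').ne'
  rw [edgeWeight, Real.rpow_neg h₀.le, Real.rpow_neg h₁'.le, ← Real.sqrt_eq_rpow,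
    ← Real.sqrt_eq_rpow, Real.sqrt_mul h₀.le, mul_inv]
  calc (√t)⁻¹ * (√(1 - t))⁻¹ ≤ (√t)⁻¹ * (√(1 - t))⁻¹ * (√t + √(1 - t)) :=
        le_mul_of_one_le_right (by positivity) hs
    _ = (√t)⁻¹ + (√(1 - t))⁻¹ := by field_simp; ring

lemma mul_one_sub_mul_le_sq {x y : ℝ} (hx : 0 ≤ x) (hy : 0 ≤ y) (hxy : x + y ≤ 1) :
    x * (1 - x) * (y * (1 - y)) ≤ (2 * ((x + y) * (1 - x) * (1 - y))) ^ 2 := by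
  -- for `x + y ≥ 1/2` use `(1 - x)(1 - y) ≥ xy`; otherwise `(1 - x)(1 - y) ≥ 1/2`, `(x + y)² ≥ 4xy`
  have key : x * y ≤ 4 * (x + y) ^ 2 * ((1 - x) * (1 - y)) := by
    nlinarith [mul_nonneg hx hy, sq_nonneg (x - y),
      mul_nonneg (mul_nonneg hx hy) (sub_nonneg.2 hxy)]
  have h : 0 ≤ (1 - x) * (1 - y) := mul_nonneg (by linarith) (by linarith)
  calc x * (1 - x) * (y * (1 - y)) = x * y * ((1 - x) * (1 - y)) := by ring
    _ ≤ 4 * (x + y) ^ 2 * ((1 - x) * (1 - y)) * ((1 - x) * (1 - y)) :=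
        mul_le_mul_of_nonneg_right key h
    _ = _ := by ring

lemma inv_le_two_mul_edgeWeight_mul {x y : ℝ} (hx : 0 < x) (hy : 0 < y) (hxy : x + y ≤ 1) :
    ((x + y) * (1 - x) * (1 - y))⁻¹ ≤ 2 * (edgeWeight x * edgeWeight y) := by
  have hx₁ : 0 < 1 - x := by linarith
  have hy₁ : 0 < 1 - y := by linarith
  have hP : 0 < (x + y) * (1 - x) * (1 - y) := by positivity
  have hsqrt : √(x * (1 - x)) * √(y * (1 - y)) ≤ 2 * ((x + y) * (1 - x) * (1 - y)) := by
    rw [← Real.sqrt_mul (by positivity)]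
    exact Real.sqrt_le_iff.2 ⟨by positivity, mul_one_sub_mul_le_sq hx.le hy.le hxy⟩
  calc ((x + y) * (1 - x) * (1 - y))⁻¹
      ≤ 2 * ((√(x * (1 - x)))⁻¹ * (√(y * (1 - y)))⁻¹) := by
        rw [← mul_inv, ← div_eq_mul_inv, le_div_iff₀ (by positivity), ← div_eq_inv_mul,
          div_le_iff₀ hP]
        linarith
    _ ≤ 2 * (edgeWeight x * edgeWeight y) := by
        have hx' := inv_sqrt_mul_one_sub_le_edgeWeight hx (by linarith)
        have hy' := inv_sqrt_mul_one_sub_le_edgeWeight hy (by linarith)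
        gcongr
        exact (inv_nonneg.2 (Real.sqrt_nonneg _)).trans hx'

lemma integrableOn_inv_stdTri :
    IntegrableOn (fun q : ℝ × ℝ ↦ ((q.1 + q.2) * (1 - q.1) * (1 - q.2))⁻¹) stdTri := by
  have hprod : IntegrableOn (fun q : ℝ × ℝ ↦ edgeWeight q.1 * edgeWeight q.2)
      (Icc 0 1 ×ˢ Icc 0 1) := by
    rw [IntegrableOn, Measure.volume_eq_prod, ← Measure.prod_restrict]
    exact integrableOn_edgeWeight.mul_prod integrableOn_edgeWeight
  refine ((hprod.mono_set stdTri_subset_Icc_prod_Icc).const_mul 2).mono' (by fun_prop) ?_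
  filter_upwards [ae_restrict_stdTri_pos] with q ⟨hx, hy, hxy⟩
  have : 0 < 1 - q.1 := by linarith
  have : 0 < 1 - q.2 := by linarith
  rw [Real.norm_of_nonneg (by positivity)]
  exact inv_le_two_mul_edgeWeight_mul hx hy hxy

section ratR

variable {α₀ α₁ α₂ β₀ β₁ β₂ : ℕ} {x y : ℝ}

lemma ratR_nonneg (hx : 0 ≤ x) (hy : 0 ≤ y) (hxy : x + y ≤ 1) :
    0 ≤ ratR α₀ α₁ α₂ β₀ β₁ β₂ (x, y) := by
  have : 0 ≤ 1 - x - y := by linarith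
  have : 0 ≤ 1 - x := by linarith
  have : 0 ≤ 1 - y := by linarith
  unfold ratR
  positivity

lemma ratR_numerator_le (hx : 0 ≤ x) (hy : 0 ≤ y) (hxy : x + y ≤ 1) :
    (1 - x - y) ^ α₀ * x ^ α₁ * y ^ α₂ ≤
      (x + y) ^ (α₁ + α₂) * (1 - x) ^ (α₀ + α₂) * (1 - y) ^ (α₀ + α₁) := by
  -- `λⱼ ≤ (1 - λₖ)(1 - λₗ) = (λⱼ + λₗ)(λⱼ + λₖ)`, which is `≥ λⱼ (λ₀ + λ₁ + λ₂) = λⱼ`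
  have h₀ : 1 - x - y ≤ (1 - x) * (1 - y) := by nlinarith
  have h₁ : x ≤ (x + y) * (1 - y) := by nlinarith
  have h₂ : y ≤ (x + y) * (1 - x) := by nlinarith
  calc (1 - x - y) ^ α₀ * x ^ α₁ * y ^ α₂
      ≤ ((1 - x) * (1 - y)) ^ α₀ * ((x + y) * (1 - y)) ^ α₁ * ((x + y) * (1 - x)) ^ α₂ := by
        have : 0 ≤ 1 - x - y := by linarith
        have : 0 ≤ 1 - x := by linarith
        have : 0 ≤ 1 - y := by linarith
        gcongr
    _ = _ := by simp only [mul_pow, pow_add]; ring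

lemma ratR_le_inv (hx : 0 < x) (hy : 0 < y) (hxy : x + y ≤ 1)
    (h₀ : β₀ ≤ α₁ + α₂ + 1) (h₁ : β₁ ≤ α₀ + α₂ + 1) (h₂ : β₂ ≤ α₀ + α₁ + 1) :
    ratR α₀ α₁ α₂ β₀ β₁ β₂ (x, y) ≤ ((x + y) * (1 - x) * (1 - y))⁻¹ := by
  have hx₁ : 0 < 1 - x := by linarith
  have hy₁ : 0 < 1 - y := by linarith
  have hden : (x + y) ^ (α₁ + α₂ + 1) * (1 - x) ^ (α₀ + α₂ + 1) * (1 - y) ^ (α₀ + α₁ + 1) ≤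
      (x + y) ^ β₀ * (1 - x) ^ β₁ * (1 - y) ^ β₂ := by
    gcongr ?_ * ?_ * ?_ <;> exact pow_le_pow_of_le_one (by positivity) (by linarith) ‹_›
  unfold ratR
  rw [← one_div, div_le_div_iff₀ (by positivity) (by positivity), one_mul]
  calc (1 - x - y) ^ α₀ * x ^ α₁ * y ^ α₂ * ((x + y) * (1 - x) * (1 - y))
      ≤ (x + y) ^ (α₁ + α₂) * (1 - x) ^ (α₀ + α₂) * (1 - y) ^ (α₀ + α₁) *
          ((x + y) * (1 - x) * (1 - y)) :=
        mul_le_mul_of_nonneg_right (ratR_numerator_le hx.le hy.le hxy) (by positivity)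
    _ = _ := by ring
    _ ≤ _ := hden

lemma integrableOn_ratR (h₀ : β₀ ≤ α₁ + α₂ + 1) (h₁ : β₁ ≤ α₀ + α₂ + 1)
    (h₂ : β₂ ≤ α₀ + α₁ + 1) : IntegrableOn (ratR α₀ α₁ α₂ β₀ β₁ β₂) stdTri := by
  refine integrableOn_inv_stdTri.mono'
    (Measurable.aestronglyMeasurable (by unfold ratR; fun_prop)) ?_
  filter_upwards [ae_restrict_stdTri_pos] with ⟨x, y⟩ ⟨hx, hy, hxy⟩
  rw [Real.norm_of_nonneg (ratR_nonneg hx.le hy.le hxy)]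
  exact ratR_le_inv hx hy hxy h₀ h₁ h₂

lemma mul_ratR_succ₀ (h : x + y ≠ 0) :
    (x + y) * ratR α₀ α₁ α₂ (β₀ + 1) β₁ β₂ (x, y) = ratR α₀ α₁ α₂ β₀ β₁ β₂ (x, y) := by
  unfold ratR
  rw [mul_div_assoc', pow_succ, show (x + y) ^ β₀ * (x + y) * (1 - x) ^ β₁ * (1 - y) ^ β₂ =
    (x + y) * ((x + y) ^ β₀ * (1 - x) ^ β₁ * (1 - y) ^ β₂) by ring, mul_div_mul_left _ _ h]

lemma mul_ratR_succ₁ (h : 1 - x ≠ 0) :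
    (1 - x) * ratR α₀ α₁ α₂ β₀ (β₁ + 1) β₂ (x, y) = ratR α₀ α₁ α₂ β₀ β₁ β₂ (x, y) := by
  unfold ratR
  rw [mul_div_assoc', pow_succ, show (x + y) ^ β₀ * ((1 - x) ^ β₁ * (1 - x)) * (1 - y) ^ β₂ =
    (1 - x) * ((x + y) ^ β₀ * (1 - x) ^ β₁ * (1 - y) ^ β₂) by ring, mul_div_mul_left _ _ h]

lemma mul_ratR_succ₂ (h : 1 - y ≠ 0) :
    (1 - y) * ratR α₀ α₁ α₂ β₀ β₁ (β₂ + 1) (x, y) = ratR α₀ α₁ α₂ β₀ β₁ β₂ (x, y) := by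
  unfold ratR
  rw [mul_div_assoc', pow_succ, show (x + y) ^ β₀ * (1 - x) ^ β₁ * ((1 - y) ^ β₂ * (1 - y)) =
    (1 - y) * ((x + y) ^ β₀ * (1 - x) ^ β₁ * (1 - y) ^ β₂) by ring, mul_div_mul_left _ _ h]

lemma ratR_add_ratR_add_ratR (h₀ : x + y ≠ 0) (h₁ : 1 - x ≠ 0) (h₂ : 1 - y ≠ 0) :
    ratR α₀ α₁ α₂ β₀ (β₁ + 1) (β₂ + 1) (x, y) + ratR α₀ α₁ α₂ (β₀ + 1) β₁ (β₂ + 1) (x, y) +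
      ratR α₀ α₁ α₂ (β₀ + 1) (β₁ + 1) β₂ (x, y) =
      2 * ratR α₀ α₁ α₂ (β₀ + 1) (β₁ + 1) (β₂ + 1) (x, y) := by
  rw [← mul_ratR_succ₀ (β₀ := β₀) h₀, ← mul_ratR_succ₁ (β₁ := β₁) h₁,
    ← mul_ratR_succ₂ (β₂ := β₂) h₂]
  ring

end ratR

/-- For `β ≥ (1,1,1)` with `‖α+β‖_∞ ≤ |α|+1`, the four functions `R^α_β`,
`R^α_{β-e_j}` are integrable on `T` and
`∫_T R^α_β = ½ (∫_T R^α_{β-e₀} + ∫_T R^α_{β-e₁} + ∫_T R^α_{β-e₂})`. -/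
theorem integral_rec_four_term (α₀ α₁ α₂ β₀ β₁ β₂ : ℕ)
    (hβ₀ : 1 ≤ β₀) (hβ₁ : 1 ≤ β₁) (hβ₂ : 1 ≤ β₂)
    (hmax : max (α₀ + β₀) (max (α₁ + β₁) (α₂ + β₂)) ≤ α₀ + α₁ + α₂ + 1) :
    IntegrableOn (ratR α₀ α₁ α₂ β₀ β₁ β₂) stdTri ∧
    IntegrableOn (ratR α₀ α₁ α₂ (β₀ - 1) β₁ β₂) stdTri ∧
    IntegrableOn (ratR α₀ α₁ α₂ β₀ (β₁ - 1) β₂) stdTri ∧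
    IntegrableOn (ratR α₀ α₁ α₂ β₀ β₁ (β₂ - 1)) stdTri ∧
    (∫ q in stdTri, ratR α₀ α₁ α₂ β₀ β₁ β₂ q) =
      (1 / 2) * ((∫ q in stdTri, ratR α₀ α₁ α₂ (β₀ - 1) β₁ β₂ q) +
        (∫ q in stdTri, ratR α₀ α₁ α₂ β₀ (β₁ - 1) β₂ q) +
        (∫ q in stdTri, ratR α₀ α₁ α₂ β₀ β₁ (β₂ - 1) q)) := by
  obtain ⟨b₀, rfl⟩ : ∃ b, β₀ = b + 1 := ⟨β₀ - 1, by omega⟩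
  obtain ⟨b₁, rfl⟩ : ∃ b, β₁ = b + 1 := ⟨β₁ - 1, by omega⟩
  obtain ⟨b₂, rfl⟩ : ∃ b, β₂ = b + 1 := ⟨β₂ - 1, by omega⟩
  simp only [Nat.add_sub_cancel]
  have hR₀ : IntegrableOn (ratR α₀ α₁ α₂ b₀ (b₁ + 1) (b₂ + 1)) stdTri :=
    integrableOn_ratR (by omega) (by omega) (by omega)
  have hR₁ : IntegrableOn (ratR α₀ α₁ α₂ (b₀ + 1) b₁ (b₂ + 1)) stdTri :=
    integrableOn_ratR (by omega) (by omega) (by omega)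
  have hR₂ : IntegrableOn (ratR α₀ α₁ α₂ (b₀ + 1) (b₁ + 1) b₂) stdTri :=
    integrableOn_ratR (by omega) (by omega) (by omega)
  refine ⟨integrableOn_ratR (by omega) (by omega) (by omega), hR₀, hR₁, hR₂, ?_⟩
  have hsum : ∫ q in stdTri, (ratR α₀ α₁ α₂ b₀ (b₁ + 1) (b₂ + 1) +
      ratR α₀ α₁ α₂ (b₀ + 1) b₁ (b₂ + 1) + ratR α₀ α₁ α₂ (b₀ + 1) (b₁ + 1) b₂) q =
      ∫ q in stdTri, 2 * ratR α₀ α₁ α₂ (b₀ + 1) (b₁ + 1) (b₂ + 1) q := by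
    refine integral_congr_ae ?_
    filter_upwards [ae_restrict_stdTri_pos] with ⟨x, y⟩ ⟨hx, hy, hxy⟩
    exact ratR_add_ratR_add_ratR (by positivity) (by linarith) (by linarith)
  rw [integral_add' (hR₀.add hR₁) hR₂, integral_add' hR₀ hR₁, integral_const_mul] at hsum
  linarith
end

section
/- Let α, β ∈ ℕ³ with β₀ = 0, β₁ ≥ 1, α₀ ≥ 1, ‖α+β‖_∞ ≤ |α| + 1, and α₂ + β₂ < |α| + 1. Then R^α_β, R^{α−e₀}_{β−e₁} and R^{α−e₀+e₂}_β are all Lebesgue integrable on T, and ∫_T R^α_β d(x,y) = ∫_T R^{α−e₀}_{β−e₁} d(x,y) − ∫_T R^{α−e₀+e₂}_β d(x,y). -/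
open MeasureTheory

/-! Since `λ₀ = (1 - λ₁) - λ₂`, the recurrence holds pointwise off the null line `x = 1`, and
everything rests on integrability. For `β₀ = 0`, `β₁ ≤ α₀ + α₂ + 1` and `β₂ ≤ α₀ + α₁ + 1`, the
bounds `λ₀ ≤ (1 - x)(1 - y)`, `x ≤ 1 - y`, `y ≤ 1 - x` on `T` give
`R^α_β ≤ 1 / ((1 - x)(1 - y))`, and on `T` the latter is at most
`(1 - x)^(-1/2) y^(-1/2) + x^(-1/2) (1 - y)^(-1/2)`, a sum of integrable products. -/

open Set

lemma ae_fst_snd_notMem {s : Set ℝ} (hs : s.Countable) :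
    ∀ᵐ q : ℝ × ℝ, q.1 ∉ s ∧ q.2 ∉ s := by
  rw [Measure.volume_eq_prod]
  exact (Measure.quasiMeasurePreserving_fst.tendsto_ae.eventually (hs.ae_notMem _)).and
    (Measure.quasiMeasurePreserving_snd.tendsto_ae.eventually (hs.ae_notMem _))

lemma MeasureTheory.IntegrableOn.mul_prod {α β : Type*} [MeasurableSpace α] [MeasurableSpace β]
    {L : Type*} [NormedRing L] {μ : Measure α} {ν : Measure β} [SFinite μ] [SFinite ν]
    {f : α → L} {g : β → L}
    {s : Set α} {t : Set β} (hf : IntegrableOn f s μ) (hg : IntegrableOn g t ν) :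
    IntegrableOn (fun q : α × β => f q.1 * g q.2) (s ×ˢ t) (μ.prod ν) := by
  rw [IntegrableOn, ← Measure.prod_restrict]
  exact Integrable.mul_prod hf hg

lemma integrableOn_rpow_Icc {r : ℝ} (hr : -1 < r) :
    IntegrableOn (fun t : ℝ => t ^ r) (Icc 0 1) :=
  (intervalIntegrable_iff_integrableOn_Icc_of_le zero_le_one).1
    (intervalIntegral.intervalIntegrable_rpow' hr)

lemma integrableOn_one_sub_rpow_Icc {r : ℝ} (hr : -1 < r) :
    IntegrableOn (fun t : ℝ => (1 - t) ^ r) (Icc 0 1) := by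
  have h :=
    ((intervalIntegral.intervalIntegrable_rpow' (a := 0) (b := 1) hr).comp_sub_left 1).symm
  rw [sub_zero, sub_self] at h
  exact (intervalIntegrable_iff_integrableOn_Icc_of_le zero_le_one).1 h

lemma inv_le_rpow_neg_half_mul_rpow_neg_half {u y : ℝ} (hy : 0 < y) (hyu : y ≤ u) :
    u⁻¹ ≤ u ^ (-(1 / 2) : ℝ) * y ^ (-(1 / 2) : ℝ) := by
  have hu : 0 < u := hy.trans_le hyu
  calc u⁻¹ = u ^ (-(1 / 2) : ℝ) * u ^ (-(1 / 2) : ℝ) := by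
        rw [← Real.rpow_add hu]; norm_num [Real.rpow_neg_one]
    _ ≤ u ^ (-(1 / 2) : ℝ) * y ^ (-(1 / 2) : ℝ) := by
        gcongr _ * ?_
        exact Real.rpow_le_rpow_of_nonpos hy hyu (by norm_num)

lemma inv_one_sub_mul_one_sub_le {x y : ℝ} (hx : 0 < x) (hy : 0 < y) (hxy : x + y ≤ 1) :
    ((1 - x) * (1 - y))⁻¹ ≤
      (1 - x) ^ (-(1 / 2) : ℝ) * y ^ (-(1 / 2) : ℝ) +
        x ^ (-(1 / 2) : ℝ) * (1 - y) ^ (-(1 / 2) : ℝ) := by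
  have hu : 0 < 1 - x := by linarith
  have hw : 0 < 1 - y := by linarith
  have hsplit : ((1 - x) * (1 - y))⁻¹ ≤ (1 - x)⁻¹ + (1 - y)⁻¹ := by
    rw [inv_add_inv hu.ne' hw.ne', inv_eq_one_div]
    exact div_le_div_of_nonneg_right (by linarith) (by positivity)
  have h₁ := inv_le_rpow_neg_half_mul_rpow_neg_half hy (by linarith : y ≤ 1 - x)
  have h₂ := inv_le_rpow_neg_half_mul_rpow_neg_half hx (by linarith : x ≤ 1 - y)
  linarith [mul_comm ((1 - y) ^ (-(1 / 2) : ℝ)) (x ^ (-(1 / 2) : ℝ))]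

lemma integrableOn_inv_one_sub_mul_one_sub :
    IntegrableOn (fun q : ℝ × ℝ => ((1 - q.1) * (1 - q.2))⁻¹) stdTri := by
  have hbound : IntegrableOn (fun q : ℝ × ℝ =>
      (1 - q.1) ^ (-(1 / 2) : ℝ) * q.2 ^ (-(1 / 2) : ℝ) +
        q.1 ^ (-(1 / 2) : ℝ) * (1 - q.2) ^ (-(1 / 2) : ℝ)) stdTri := by
    refine IntegrableOn.mono_set ?_ stdTri_subset_Icc_prod_Icc
    rw [Measure.volume_eq_prod]
    have hr : (-1 : ℝ) < -(1 / 2) := by norm_num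
    exact ((integrableOn_one_sub_rpow_Icc hr).mul_prod (integrableOn_rpow_Icc hr)).add
      ((integrableOn_rpow_Icc hr).mul_prod (integrableOn_one_sub_rpow_Icc hr))
  refine hbound.mono' (by fun_prop) ?_
  rw [ae_restrict_iff' measurableSet_stdTri]
  filter_upwards [ae_fst_snd_notMem (s := {0, 1}) (by simp)] with q ⟨hq₁, hq₂⟩ ⟨hx, hy, hxy⟩
  simp only [mem_insert_iff, mem_singleton_iff, not_or] at hq₁ hq₂
  have hx' : 0 < q.1 := lt_of_le_of_ne hx (Ne.symm hq₁.1)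
  have hy' : 0 < q.2 := lt_of_le_of_ne hy (Ne.symm hq₂.1)
  rw [Real.norm_of_nonneg (inv_nonneg.2 (mul_nonneg (by linarith) (by linarith)))]
  exact inv_one_sub_mul_one_sub_le hx' hy' hxy

lemma monomial_le_pow_one_sub_mul_pow_one_sub (a₀ a₁ a₂ : ℕ) {q : ℝ × ℝ} (hq : q ∈ stdTri) :
    (1 - q.1 - q.2) ^ a₀ * q.1 ^ a₁ * q.2 ^ a₂ ≤
      (1 - q.1) ^ (a₀ + a₂) * (1 - q.2) ^ (a₀ + a₁) := by
  obtain ⟨hx, hy, hxy⟩ := hq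
  have hl : 0 ≤ 1 - q.1 - q.2 := by linarith
  have hu : 0 ≤ 1 - q.1 := by linarith
  have hw : 0 ≤ 1 - q.2 := by linarith
  calc (1 - q.1 - q.2) ^ a₀ * q.1 ^ a₁ * q.2 ^ a₂
      ≤ ((1 - q.1) * (1 - q.2)) ^ a₀ * (1 - q.2) ^ a₁ * (1 - q.1) ^ a₂ := by
        gcongr
        · nlinarith
        · linarith
        · linarith
    _ = (1 - q.1) ^ (a₀ + a₂) * (1 - q.2) ^ (a₀ + a₁) := by
        rw [mul_pow, pow_add, pow_add]; ring

lemma ratR_le_inv_one_sub_mul_one_sub {a₀ a₁ a₂ b₁ b₂ : ℕ} (hb₁ : b₁ ≤ a₀ + a₂ + 1)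
    (hb₂ : b₂ ≤ a₀ + a₁ + 1) {q : ℝ × ℝ} (hq : q ∈ stdTri) (hx : q.1 < 1) (hy : q.2 < 1) :
    ratR a₀ a₁ a₂ 0 b₁ b₂ q ≤ ((1 - q.1) * (1 - q.2))⁻¹ := by
  have hu : 0 < 1 - q.1 := by linarith
  have hw : 0 < 1 - q.2 := by linarith
  rw [ratR, pow_zero, one_mul, inv_eq_one_div, div_le_div_iff₀ (by positivity) (by positivity),
    one_mul]
  calc (1 - q.1 - q.2) ^ a₀ * q.1 ^ a₁ * q.2 ^ a₂ * ((1 - q.1) * (1 - q.2))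
      ≤ (1 - q.1) ^ (a₀ + a₂) * (1 - q.2) ^ (a₀ + a₁) * ((1 - q.1) * (1 - q.2)) :=
        mul_le_mul_of_nonneg_right (monomial_le_pow_one_sub_mul_pow_one_sub a₀ a₁ a₂ hq)
          (by positivity)
    _ = (1 - q.1) ^ (a₀ + a₂ + 1) * (1 - q.2) ^ (a₀ + a₁ + 1) := by ring
    _ ≤ (1 - q.1) ^ b₁ * (1 - q.2) ^ b₂ :=
        mul_le_mul (pow_le_pow_of_le_one hu.le (by linarith [hq.1]) hb₁)
          (pow_le_pow_of_le_one hw.le (by linarith [hq.2.1]) hb₂) (by positivity) (by positivity)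

lemma ratR_nonneg_s13 (a₀ a₁ a₂ b₀ b₁ b₂ : ℕ) {q : ℝ × ℝ} (hq : q ∈ stdTri) :
    0 ≤ ratR a₀ a₁ a₂ b₀ b₁ b₂ q := by
  obtain ⟨hx, hy, hxy⟩ := hq
  have hl : 0 ≤ 1 - q.1 - q.2 := by linarith
  have hu : 0 ≤ 1 - q.1 := by linarith
  have hw : 0 ≤ 1 - q.2 := by linarith
  unfold ratR
  positivity

lemma measurable_ratR (a₀ a₁ a₂ b₀ b₁ b₂ : ℕ) : Measurable (ratR a₀ a₁ a₂ b₀ b₁ b₂) := by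
  unfold ratR
  fun_prop

lemma integrableOn_ratR_s13 {a₀ a₁ a₂ b₁ b₂ : ℕ} (hb₁ : b₁ ≤ a₀ + a₂ + 1)
    (hb₂ : b₂ ≤ a₀ + a₁ + 1) : IntegrableOn (ratR a₀ a₁ a₂ 0 b₁ b₂) stdTri := by
  refine integrableOn_inv_one_sub_mul_one_sub.mono'
    (measurable_ratR _ _ _ _ _ _).aestronglyMeasurable ?_
  rw [ae_restrict_iff' measurableSet_stdTri]
  filter_upwards [ae_fst_snd_notMem (s := {1}) (by simp)] with q ⟨hq₁, hq₂⟩ hq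
  rw [mem_singleton_iff] at hq₁ hq₂
  rw [Real.norm_of_nonneg (ratR_nonneg_s13 _ _ _ _ _ _ hq)]
  exact ratR_le_inv_one_sub_mul_one_sub hb₁ hb₂ hq
    (lt_of_le_of_ne (by linarith [hq.2.1, hq.2.2]) hq₁)
    (lt_of_le_of_ne (by linarith [hq.1, hq.2.2]) hq₂)

lemma ratR_succ_succ (a₀ a₁ a₂ b₀ b₁ b₂ : ℕ) {q : ℝ × ℝ} (hx : q.1 ≠ 1) :
    ratR (a₀ + 1) a₁ a₂ b₀ (b₁ + 1) b₂ q =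
      ratR a₀ a₁ a₂ b₀ b₁ b₂ q - ratR a₀ a₁ (a₂ + 1) b₀ (b₁ + 1) b₂ q := by
  have hu : 1 - q.1 ≠ 0 := sub_ne_zero.2 (Ne.symm hx)
  unfold ratR
  field_simp
  ring

lemma ae_restrict_stdTri_ratR_succ_succ (a₀ a₁ a₂ b₀ b₁ b₂ : ℕ) :
    ratR (a₀ + 1) a₁ a₂ b₀ (b₁ + 1) b₂ =ᵐ[volume.restrict stdTri]
      ratR a₀ a₁ a₂ b₀ b₁ b₂ - ratR a₀ a₁ (a₂ + 1) b₀ (b₁ + 1) b₂ :=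
  ae_restrict_of_ae <| (ae_fst_snd_notMem (s := {1}) (by simp)).mono fun _ hq =>
    ratR_succ_succ a₀ a₁ a₂ b₀ b₁ b₂ hq.1

/-- For `β₀ = 0`, `β₁ ≥ 1`, `α₀ ≥ 1`, `‖α+β‖_∞ ≤ |α|+1` and `α₂+β₂ < |α|+1`, the
functions `R^α_β`, `R^{α-e₀}_{β-e₁}`, `R^{α-e₀+e₂}_β` are integrable on `T` and
`∫_T R^α_β = ∫_T R^{α-e₀}_{β-e₁} − ∫_T R^{α-e₀+e₂}_β`. -/
theorem integral_rec_three_term (α₀ α₁ α₂ β₀ β₁ β₂ : ℕ)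
    (hβ₀ : β₀ = 0) (hβ₁ : 1 ≤ β₁) (hα₀ : 1 ≤ α₀)
    (hmax : max (α₀ + β₀) (max (α₁ + β₁) (α₂ + β₂)) ≤ α₀ + α₁ + α₂ + 1)
    (hlt : α₂ + β₂ < α₀ + α₁ + α₂ + 1) :
    IntegrableOn (ratR α₀ α₁ α₂ β₀ β₁ β₂) stdTri ∧
    IntegrableOn (ratR (α₀ - 1) α₁ α₂ β₀ (β₁ - 1) β₂) stdTri ∧
    IntegrableOn (ratR (α₀ - 1) α₁ (α₂ + 1) β₀ β₁ β₂) stdTri ∧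
    (∫ q in stdTri, ratR α₀ α₁ α₂ β₀ β₁ β₂ q) =
      (∫ q in stdTri, ratR (α₀ - 1) α₁ α₂ β₀ (β₁ - 1) β₂ q) -
        (∫ q in stdTri, ratR (α₀ - 1) α₁ (α₂ + 1) β₀ β₁ β₂ q) := by
  subst hβ₀
  obtain ⟨a, rfl⟩ : ∃ a, α₀ = a + 1 := ⟨α₀ - 1, by omega⟩
  obtain ⟨b, rfl⟩ : ∃ b, β₁ = b + 1 := ⟨β₁ - 1, by omega⟩
  simp only [Nat.add_sub_cancel]
  have h₂ : IntegrableOn (ratR a α₁ α₂ 0 b β₂) stdTri := integrableOn_ratR_s13 (by omega) (by omega)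
  have h₃ : IntegrableOn (ratR a α₁ (α₂ + 1) 0 (b + 1) β₂) stdTri :=
    integrableOn_ratR_s13 (by omega) (by omega)
  refine ⟨integrableOn_ratR_s13 (by omega) (by omega), h₂, h₃, ?_⟩
  rw [integral_congr_ae (ae_restrict_stdTri_ratR_succ_succ a α₁ α₂ 0 b β₂)]
  exact integral_sub h₂ h₃
end

section
/- Let p : ℝ² → ℝ be a polynomial function of total degree at most 2, let v₀, v₁, v₂ ∈ ℝ² be arbitrary points, and let m = (v₀+v₁+v₂)/3. Then 6·p(m) − 2·(p(v₀)+p(v₁)+p(v₂)) + ∑_{k=0}^{2} (∇p)(v_k) · (v_k − m) = 0, where (∇p)(v_k) · (v_k − m) denotes the Fréchet derivative of p at v_k applied to the vector v_k − m. -/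
/-! Along any segment a polynomial of total degree at most 2 restricts to a univariate quadratic `q`,
for which the trapezoid rule `2 (q 1 - q 0) = q' 0 + q' 1` is exact. Applied to the segment from the
centroid `m` to each vertex `v k` this gives
`Dp(v k)(v k - m) = 2 (p(v k) - p(m)) - Dp(m)(v k - m)`,
and the last terms sum to `Dp(m)(∑ k, (v k - m)) = 0`. -/

open Finset

namespace Polynomial

theorem two_mul_eval_one_sub_eval_zero_of_natDegree_le_two {R : Type*} [CommRing R] {q : R[X]}
    (hq : q.natDegree ≤ 2) :
    2 * (q.eval 1 - q.eval 0) = q.derivative.eval 0 + q.derivative.eval 1 := by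
  have hq' : q.derivative.natDegree < 3 := (natDegree_derivative_le q).trans_lt (by omega)
  have h3 : q.coeff 3 = 0 := coeff_eq_zero_of_natDegree_lt (by omega)
  rw [eval_eq_sum_range' (n := 3) (by omega), eval_eq_sum_range' (n := 3) (by omega),
    eval_eq_sum_range' hq', eval_eq_sum_range' hq']
  simp only [sum_range_succ, sum_range_zero, coeff_derivative, h3]
  push_cast
  ring

end Polynomial

namespace MvPolynomial

theorem natDegree_aeval_le_totalDegree {R σ : Type*} [CommSemiring R] {g : σ → Polynomial R}
    (hg : ∀ i, (g i).natDegree ≤ 1) (P : MvPolynomial σ R) :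
    (aeval g P).natDegree ≤ P.totalDegree := by
  rw [aeval_def, eval₂_eq]
  refine Polynomial.natDegree_sum_le_of_forall_le _ _ fun d hd => ?_
  calc (algebraMap R (Polynomial R) (P.coeff d) * ∏ i ∈ d.support, g i ^ d i).natDegree
      ≤ ∑ i ∈ d.support, (g i ^ d i).natDegree :=
        (Polynomial.natDegree_C_mul_le _ _).trans (Polynomial.natDegree_prod_le _ _)
    _ ≤ ∑ i ∈ d.support, d i := sum_le_sum fun i _ =>
        Polynomial.natDegree_pow_le.trans (mul_le_of_le_one_right (Nat.zero_le _) (hg i))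
    _ ≤ P.totalDegree := le_totalDegree hd

section LineRestriction

variable {R σ : Type*} [CommSemiring R]

noncomputable def lineRestriction (x h : σ → R) (P : MvPolynomial σ R) : Polynomial R :=
  aeval (fun i => Polynomial.C (h i) * Polynomial.X + Polynomial.C (x i)) P

theorem eval_lineRestriction (x h : σ → R) (P : MvPolynomial σ R) (t : R) :
    (lineRestriction x h P).eval t = eval (x + t • h) P := by
  rw [lineRestriction, ← Polynomial.coe_aeval_eq_eval, ← AlgHom.comp_apply, comp_aeval,
    aeval_eq_eval]
  congr 2
  funext i
  simp only [Polynomial.coe_aeval_eq_eval, Polynomial.eval_add, Polynomial.eval_mul,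
    Polynomial.eval_C, Polynomial.eval_X, Pi.add_apply, Pi.smul_apply, smul_eq_mul]
  ring

theorem natDegree_lineRestriction_le (x h : σ → R) (P : MvPolynomial σ R) :
    (lineRestriction x h P).natDegree ≤ P.totalDegree :=
  natDegree_aeval_le_totalDegree (fun _ => Polynomial.natDegree_linear_le) P

theorem eval_derivative_lineRestriction [Fintype σ] (x h : σ → ℝ) (P : MvPolynomial σ ℝ)
    (t : ℝ) :
    (lineRestriction x h P).derivative.eval t = fderiv ℝ (fun z => eval z P) (x + t • h) h := by
  have hP : HasFDerivAt (fun z => eval z P) (fderiv ℝ (fun z => eval z P) (x + t • h))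
      (x + t • h) :=
    (AnalyticOnNhd.eval_mvPolynomial P _ trivial).differentiableAt.hasFDerivAt
  have hline : HasDerivAt (fun s : ℝ => x + s • h) h t := by
    simpa using ((hasDerivAt_id t).smul_const h).const_add x
  refine (Polynomial.hasDerivAt _ t).unique ?_
  simpa only [Function.comp_def, ← eval_lineRestriction] using hP.comp_hasDerivAt t hline

theorem two_mul_eval_sub_eval_of_totalDegree_le_two [Fintype σ] {P : MvPolynomial σ ℝ}
    (hP : P.totalDegree ≤ 2) (x y : σ → ℝ) :
    2 * (eval y P - eval x P) =
      fderiv ℝ (fun z => eval z P) x (y - x) + fderiv ℝ (fun z => eval z P) y (y - x) := by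
  have := Polynomial.two_mul_eval_one_sub_eval_zero_of_natDegree_le_two
    ((natDegree_lineRestriction_le x (y - x) P).trans hP)
  simpa [eval_lineRestriction, eval_derivative_lineRestriction] using this

end LineRestriction

end MvPolynomial

theorem sum_fderiv_apply_sub_eq_two_mul_sum_sub {ι E : Type*} [Fintype ι] [NormedAddCommGroup E]
    [NormedSpace ℝ E] (f : E → ℝ) (v : ι → E) (m : E) (hm : ∑ k, (v k - m) = 0)
    (hf : ∀ y, 2 * (f y - f m) = fderiv ℝ f m (y - m) + fderiv ℝ f y (y - m)) :
    ∑ k, fderiv ℝ f (v k) (v k - m) = 2 * ∑ k, (f (v k) - f m) := by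
  have hlin : ∑ k, fderiv ℝ f m (v k - m) = 0 := by rw [← map_sum, hm, map_zero]
  rw [mul_sum, ← sub_eq_zero, ← sum_sub_distrib, ← neg_eq_zero, ← hlin, ← sum_neg_distrib]
  exact sum_congr rfl fun k _ => by linarith [hf (v k)]

/-- For a polynomial `p : ℝ² → ℝ` of total degree at most 2, any points `v₀,v₁,v₂`
and `m = (v₀+v₁+v₂)/3`:
`6 p(m) − 2(p(v₀)+p(v₁)+p(v₂)) + ∑_k ∇p(v_k)·(v_k − m) = 0`. -/
theorem quadratic_functional_vanishes (P : MvPolynomial (Fin 2) ℝ)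
    (hP : P.totalDegree ≤ 2) (v : Fin 3 → Fin 2 → ℝ) :
    6 * MvPolynomial.eval ((3 : ℝ)⁻¹ • (v 0 + v 1 + v 2)) P -
        2 * (MvPolynomial.eval (v 0) P + MvPolynomial.eval (v 1) P +
          MvPolynomial.eval (v 2) P) +
      ∑ k : Fin 3,
        fderiv ℝ (fun x : Fin 2 → ℝ => MvPolynomial.eval x P) (v k)
          (v k - (3 : ℝ)⁻¹ • (v 0 + v 1 + v 2)) = 0 := by
  set m : Fin 2 → ℝ := (3 : ℝ)⁻¹ • (v 0 + v 1 + v 2)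
  have hm : ∑ k, (v k - m) = 0 := by
    simp only [Fin.sum_univ_three, m]
    module
  rw [sum_fderiv_apply_sub_eq_two_mul_sum_sub _ v m hm
    (MvPolynomial.two_mul_eval_sub_eval_of_totalDegree_le_two hP m), Fin.sum_univ_three]
  ring
end

section
/- Let v₀, v₁, v₂ ∈ ℝ² be affinely independent with associated barycentric coordinate functions λ₀, λ₁, λ₂ : ℝ² → ℝ (the unique affine maps with λ_i(v_j) = δ_{ij} and λ₀+λ₁+λ₂ ≡ 1), let m = (v₀+v₁+v₂)/3, and let i, j ∈ {0,1,2} with i ≠ j. Then the function q = λ_i² λ_j − λ_i λ_j² satisfies 6·q(m) − 2·(q(v₀)+q(v₁)+q(v₂)) + ∑_{k=0}^{2} (∇q)(v_k) · (v_k − m) = 0, where (∇q)(v_k) · (v_k − m) denotes the Fréchet derivative of q at v_k applied to v_k − m. -/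
/-!
Write `q = λᵢ λⱼ (λᵢ - λⱼ)`. It vanishes at the centroid, where every barycentric coordinate
equals `1/3`, and at the vertices, where the coordinates take only the values `0` and `1`.
At a vertex, `λ² = λ` collapses the derivative term `∇q(v_k) · (v_k - m)` to
`(λⱼ(v_k) - λᵢ(v_k)) / 3`, and these terms cancel in the sum over `k` because
`∑ₖ λᵢ(v_k) = 1` for every `i`.
-/

theorem AffineMap.hasFDerivAt_of_finiteDimensional {𝕜 E F : Type*} [NontriviallyNormedField 𝕜]
    [CompleteSpace 𝕜] [NormedAddCommGroup E] [NormedSpace 𝕜 E] [FiniteDimensional 𝕜 E]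
    [NormedAddCommGroup F] [NormedSpace 𝕜 F] (f : E →ᵃ[𝕜] F) (x : E) :
    HasFDerivAt f (LinearMap.toContinuousLinearMap f.linear) x :=
  (ContinuousAffineMap.mk f f.continuous_of_finiteDimensional).hasFDerivAt

theorem AffineMap.fderiv_sq_mul_sub_mul_sq_apply_sub {E : Type*} [NormedAddCommGroup E]
    [NormedSpace ℝ E] [FiniteDimensional ℝ E] (f g : E →ᵃ[ℝ] ℝ) (x y z : E) :
    fderiv ℝ (fun p => f p ^ 2 * g p - f p * g p ^ 2) x (y - z) =
      (2 * f x * g x - g x ^ 2) * (f y - f z) + (f x ^ 2 - 2 * f x * g x) * (g y - g z) := by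
  have hf := f.hasFDerivAt_of_finiteDimensional x
  have hg := g.hasFDerivAt_of_finiteDimensional x
  rw [(((hf.pow 2).fun_mul hg).fun_sub (hf.fun_mul (hg.pow 2))).fderiv]
  have hf_sub : f.linear (y - z) = f y - f z := f.linearMap_vsub y z
  have hg_sub : g.linear (y - z) = g y - g z := g.linearMap_vsub y z
  simp only [sub_apply, add_apply, smul_apply, LinearMap.coe_toContinuousLinearMap', hf_sub,
    hg_sub, smul_eq_mul, nsmul_eq_mul]
  ring

theorem AffineMap.apply_inv_three_smul_add_add {V W : Type*} [AddCommGroup V] [Module ℝ V]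
    [AddCommGroup W] [Module ℝ W] (f : V →ᵃ[ℝ] W) (x y z : V) :
    f ((3 : ℝ)⁻¹ • (x + y + z)) = (3 : ℝ)⁻¹ • (f x + f y + f z) := by
  rw [f.decomp]
  simp only [Pi.add_apply, map_smul, map_add]
  module

theorem zienkiewicz_cubic_functional_vanishes_general (v : Fin 3 → Fin 2 → ℝ)
    (A : Fin 3 → ((Fin 2 → ℝ) →ᵃ[ℝ] ℝ))
    (hA : ∀ i j : Fin 3, A i (v j) = if i = j then 1 else 0)
    (i j : Fin 3) :
    6 * ((A i ((3 : ℝ)⁻¹ • (v 0 + v 1 + v 2))) ^ 2 * A j ((3 : ℝ)⁻¹ • (v 0 + v 1 + v 2)) -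
          A i ((3 : ℝ)⁻¹ • (v 0 + v 1 + v 2)) * (A j ((3 : ℝ)⁻¹ • (v 0 + v 1 + v 2))) ^ 2) -
        2 * (((A i (v 0)) ^ 2 * A j (v 0) - A i (v 0) * (A j (v 0)) ^ 2) +
          ((A i (v 1)) ^ 2 * A j (v 1) - A i (v 1) * (A j (v 1)) ^ 2) +
          ((A i (v 2)) ^ 2 * A j (v 2) - A i (v 2) * (A j (v 2)) ^ 2)) +
      ∑ k : Fin 3,
        fderiv ℝ (fun x : Fin 2 → ℝ => (A i x) ^ 2 * A j x - A i x * (A j x) ^ 2) (v k)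
          (v k - (3 : ℝ)⁻¹ • (v 0 + v 1 + v 2)) = 0 := by
  set m := (3 : ℝ)⁻¹ • (v 0 + v 1 + v 2)
  have h_sum : ∀ l, A l (v 0) + A l (v 1) + A l (v 2) = 1 := by
    intro l
    fin_cases l <;> simp [hA]
  have h_centroid : ∀ l, A l m = 3⁻¹ := by
    intro l
    rw [(A l).apply_inv_three_smul_add_add, h_sum, smul_eq_mul, mul_one]
  have h_idem : ∀ l k, A l (v k) ^ 2 = A l (v k) := by
    intro l k
    rw [hA]
    split_ifs <;> norm_num
  have h_vertex : ∀ k, A i (v k) ^ 2 * A j (v k) - A i (v k) * A j (v k) ^ 2 = 0 := by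
    intro k
    rw [h_idem, h_idem, sub_self]
  have h_deriv : ∀ k, fderiv ℝ (fun x => A i x ^ 2 * A j x - A i x * A j x ^ 2) (v k) (v k - m) =
      3⁻¹ * (A j (v k) - A i (v k)) := by
    intro k
    rw [AffineMap.fderiv_sq_mul_sub_mul_sq_apply_sub, h_centroid, h_centroid]
    linear_combination (3 * A j (v k) - 3⁻¹) * h_idem i k - (3 * A i (v k) - 3⁻¹) * h_idem j k
  rw [h_centroid, h_centroid, h_vertex, h_vertex, h_vertex, Fin.sum_univ_three, h_deriv, h_deriv,
    h_deriv]
  linear_combination (3 : ℝ)⁻¹ * h_sum j - (3 : ℝ)⁻¹ * h_sum i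

/-- For barycentric coordinates `λ₀,λ₁,λ₂` of an affinely independent triple
`v₀,v₁,v₂ ∈ ℝ²`, the cubic `q = λ_i² λ_j − λ_i λ_j²` (for `i ≠ j`) satisfies
`6 q(m) − 2(q(v₀)+q(v₁)+q(v₂)) + ∑_k ∇q(v_k)·(v_k − m) = 0` with `m` the centroid. -/
theorem zienkiewicz_cubic_functional_vanishes (v : Fin 3 → Fin 2 → ℝ)
    (hv : AffineIndependent ℝ v) (A : Fin 3 → ((Fin 2 → ℝ) →ᵃ[ℝ] ℝ))
    (hA : ∀ i j : Fin 3, A i (v j) = if i = j then 1 else 0)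
    (hsum : ∀ x : Fin 2 → ℝ, ∑ i : Fin 3, A i x = 1)
    (i j : Fin 3) (hij : i ≠ j) :
    6 * ((A i ((3 : ℝ)⁻¹ • (v 0 + v 1 + v 2))) ^ 2 * A j ((3 : ℝ)⁻¹ • (v 0 + v 1 + v 2)) -
          A i ((3 : ℝ)⁻¹ • (v 0 + v 1 + v 2)) * (A j ((3 : ℝ)⁻¹ • (v 0 + v 1 + v 2))) ^ 2) -
        2 * (((A i (v 0)) ^ 2 * A j (v 0) - A i (v 0) * (A j (v 0)) ^ 2) +
          ((A i (v 1)) ^ 2 * A j (v 1) - A i (v 1) * (A j (v 1)) ^ 2) +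
          ((A i (v 2)) ^ 2 * A j (v 2) - A i (v 2) * (A j (v 2)) ^ 2)) +
      ∑ k : Fin 3,
        fderiv ℝ (fun x : Fin 2 → ℝ => (A i x) ^ 2 * A j x - A i x * (A j x) ^ 2) (v k)
          (v k - (3 : ℝ)⁻¹ • (v 0 + v 1 + v 2)) = 0 :=
  zienkiewicz_cubic_functional_vanishes_general v A hA i j
end

section
/- Let B be a bivariate real polynomial such that x² divides B, y² divides B, and (1 − x − y) divides B in ℝ[x,y]. If the univariate function t ↦ (∂_x B + ∂_y B)(t, 1−t) agrees with a polynomial of degree at most 2 in t, then (∂_x B + ∂_y B)(t, 1−t) = 0 for all t ∈ ℝ. In particular, no polynomial B with these divisibility properties can have a normal derivative along the line x + y = 1 that is a quadratic polynomial in the line parameter and is nonzero at the midpoint (1/2, 1/2). -/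
/-!
Restrict to the line `x + y = 1` through `φ = aeval ![X, 1 - X] : ℝ[x,y] → ℝ[t]`. Since
`(1 - x - y) ∣ B`, `φ B = 0`. Writing `B = x² E`, the domain `ℝ[t]` gives `φ E = 0`, and then the
Leibniz rule gives `φ (D B) = t² φ (D E)` for the derivation `D = ∂_x + ∂_y`; symmetrically
`(1 - t)² ∣ φ (D B)`. So the trace is divisible by `t² (1 - t)²`, of degree 4, and a trace of
degree at most 2 must vanish.
-/

open MvPolynomial

theorem Derivation.map_sq_dvd_map_apply {R A S F : Type*} [CommSemiring R] [CommRing A]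
    [Algebra R A] [CommRing S] [NoZeroDivisors S] [FunLike F A S] [RingHomClass F A S]
    (D : Derivation R A A) (φ : F) {a b : A} (hab : a ^ 2 ∣ b) (hb : φ b = 0) (ha : φ a ≠ 0) :
    φ a ^ 2 ∣ φ (D b) := by
  obtain ⟨e, rfl⟩ := hab
  have he : φ e = 0 := by simpa [ha] using hb
  refine ⟨φ (D e), ?_⟩
  simp [Derivation.leibniz, Derivation.leibniz_pow, he]

theorem MvPolynomial.eval_eq_eval_aeval {σ R : Type*} [CommRing R] (f : σ → Polynomial R)
    (t : R) (p : MvPolynomial σ R) :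
    eval (fun i => (f i).eval t) p = (aeval f p).eval t := by
  rw [← Polynomial.coe_aeval_eq_eval, comp_aeval_apply]
  rfl

namespace Polynomial

theorem degree_one_sub_X {R : Type*} [Ring R] [Nontrivial R] : (1 - X : R[X]).degree = 1 := by
  rw [← neg_sub, degree_neg, ← C_1, degree_X_sub_C]

theorem eq_zero_of_X_pow_dvd_of_one_sub_X_pow_dvd {R : Type*} [CommRing R] [IsDomain R]
    {p : R[X]} {m n : ℕ} (hm : X ^ m ∣ p) (hn : (1 - X) ^ n ∣ p)
    (hp : p.degree < (m + n : ℕ)) : p = 0 := by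
  have hcop : IsCoprime (X : R[X]) (1 - X) := ⟨1, 1, by ring⟩
  refine eq_zero_of_dvd_of_degree_lt (hcop.pow.mul_dvd hm hn) ?_
  rwa [degree_mul, degree_pow, degree_pow, degree_X, degree_one_sub_X, nsmul_one, nsmul_one]

end Polynomial

/-- If `x² ∣ B`, `y² ∣ B` and `(1−x−y) ∣ B` in `ℝ[x,y]`, and the normal-derivative trace
`t ↦ (∂_x B + ∂_y B)(t, 1−t)` agrees with a polynomial of degree at most 2, then this
trace vanishes identically. -/
theorem no_polynomial_normal_bubble (B : MvPolynomial (Fin 2) ℝ)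
    (hx : (X 0 : MvPolynomial (Fin 2) ℝ) ^ 2 ∣ B)
    (hy : (X 1 : MvPolynomial (Fin 2) ℝ) ^ 2 ∣ B)
    (hl : (1 - X 0 - X 1 : MvPolynomial (Fin 2) ℝ) ∣ B)
    (hdeg : ∃ P : Polynomial ℝ, P.degree ≤ 2 ∧
      ∀ t : ℝ, eval ![t, 1 - t] (pderiv 0 B + pderiv 1 B) = P.eval t) :
    ∀ t : ℝ, eval ![t, 1 - t] (pderiv 0 B + pderiv 1 B) = 0 := by
  obtain ⟨P, hPdeg, hP⟩ := hdeg
  let φ : MvPolynomial (Fin 2) ℝ →ₐ[ℝ] Polynomial ℝ := aeval ![Polynomial.X, 1 - Polynomial.X]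
  let D : Derivation ℝ (MvPolynomial (Fin 2) ℝ) (MvPolynomial (Fin 2) ℝ) := pderiv 0 + pderiv 1
  have hB : φ B = 0 := by
    obtain ⟨C, rfl⟩ := hl
    simp [φ]
  have htrace : φ (D B) = P := Polynomial.funext fun t => by
    have hline : (fun i => (![Polynomial.X, 1 - Polynomial.X] i).eval t) = ![t, 1 - t] := by
      ext i; fin_cases i <;> simp
    rw [← hP t, ← hline, eval_eq_eval_aeval]
    rfl
  have hX : Polynomial.X ^ 2 ∣ P := by
    simpa [φ, htrace] using D.map_sq_dvd_map_apply φ hx hB (by simp [φ])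
  have h1X : (1 - Polynomial.X) ^ 2 ∣ P := by
    have h1X0 : (1 - Polynomial.X : Polynomial ℝ) ≠ 0 :=
      Polynomial.ne_zero_of_degree_gt (n := 0) (by rw [Polynomial.degree_one_sub_X]; decide)
    simpa [φ, htrace] using D.map_sq_dvd_map_apply φ hy hB (by simpa [φ] using h1X0)
  have hP0 : P = 0 := Polynomial.eq_zero_of_X_pow_dvd_of_one_sub_X_pow_dvd hX h1X
    (hPdeg.trans_lt (by norm_num))
  intro t
  rw [hP t, hP0, Polynomial.eval_zero]
end
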